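/- arXiv:1412.2206 — 6 statements merged into one kernel-verified Lean document; each statement's English description precedes it below -/
import Mathlib

section
/- For every x∈ℝ^K, w^+(x) = sup_{p∈Δ(K)} ( v^+(p) − ⟨p,x⟩ ), i.e. w^+ = (v^+)^♯; and for every p∈Δ(K), v^+(p) = inf_{x∈ℝ^K} ( w^+(x) + ⟨x,p⟩ ), i.e. v^+ = (w^+)^♭ on Δ(K). -/
/-! Player 1's supremum can be taken type by type: with `ψ(t)ₖ = sup_s Gᵏ(s,t)` one has
`v⁺(p) = inf_t ⟨p, ψ(t)⟩` and `w⁺(x) = inf_t maxₖ (ψ(t)ₖ - xₖ)`. Weak duality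
`v⁺(p) - ⟨p,x⟩ ≤ w⁺(x)` is then immediate, and testing the infimum defining `(w⁺)♭(p)` at
`x = ψ(t)`, where `w⁺ ≤ 0`, gives `v⁺ = (w⁺)♭`. For `w⁺ ≤ (v⁺)♯`: `ψ` is convex in `t`, so the
set of vectors dominating some `ψ(t)` is convex and has no point strictly below `x + w⁺(x)·𝟙`;
a separating hyperplane through that point has a nonnegative normal, which normalised is a
`p ∈ Δ(K)` with `v⁺(p) - ⟨p,x⟩ ≥ w⁺(x)`. -/

open Set Pointwise

theorem ConvexOn.ciSup {E ι : Type*} [AddCommGroup E] [Module ℝ E] [Nonempty ι] {s : Set E}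
    {f : ι → E → ℝ} (hf : ∀ i, ConvexOn ℝ s (f i))
    (hbdd : ∀ x ∈ s, BddAbove (range fun i => f i x)) (hs : Convex ℝ s) :
    ConvexOn ℝ s fun x => ⨆ i, f i x :=
  ⟨hs, fun x hx y hy _ _ ha hb hab => ciSup_le fun i =>
    ((hf i).2 hx hy ha hb hab).trans <| add_le_add
      (mul_le_mul_of_nonneg_left (le_ciSup (hbdd x hx) i) ha)
      (mul_le_mul_of_nonneg_left (le_ciSup (hbdd y hy) i) hb)⟩

theorem ConvexOn.convex_setOf_exists_le {E β : Type*} [AddCommGroup E] [Module ℝ E]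
    [AddCommGroup β] [PartialOrder β] [Module ℝ β] [IsOrderedAddMonoid β] [PosSMulMono ℝ β]
    {s : Set E} {f : E → β} (hf : ConvexOn ℝ s f) : Convex ℝ {y | ∃ t : s, f t ≤ y} := by
  convert hf.convex_epigraph.linear_image (LinearMap.snd ℝ E β)
  ext y
  simp

theorem exists_dotProduct_lt_of_convex_of_isOpen {K : Type*} [Fintype K] {A : Set (K → ℝ)}
    (hA : Convex ℝ A) (hAo : IsOpen A) {c : K → ℝ} (hc : c ∉ A) :
    ∃ ν : K → ℝ, ∀ a ∈ A, ν ⬝ᵥ a < ν ⬝ᵥ c := by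
  classical
  obtain ⟨f, hf⟩ := geometric_hahn_banach_open_point hA hAo hc
  have hfν : ∀ y, f y = (fun k => f (Pi.single k 1)) ⬝ᵥ y := fun y => by
    rw [← f.coe_coe, LinearMap.pi_apply_eq_sum_univ, dotProduct_comm]
    simp only [dotProduct, smul_eq_mul]
    congr! with k
    simp [Pi.single_apply, eq_comm]
  exact ⟨_, fun a ha => by rw [← hfν, ← hfν]; exact hf a ha⟩

theorem nonpos_of_forall_pos_dotProduct_lt {K : Type*} [Fintype K] {ν : K → ℝ} {M : ℝ}
    (h : ∀ o : K → ℝ, (∀ k, 0 < o k) → ν ⬝ᵥ o < M) : ν ≤ 0 := by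
  classical
  intro k
  by_contra! hk
  have hpos : 0 < M - ν ⬝ᵥ 1 := sub_pos.2 (h 1 fun _ => one_pos)
  set r := (M - ν ⬝ᵥ 1) / ν k
  have hr : 0 ≤ r := (div_pos hpos hk).le
  have hlt := h (1 + r • Pi.single k 1) fun j => by
    have : 0 ≤ (Pi.single k (1 : ℝ) : K → ℝ) j := by
      rcases eq_or_ne j k with rfl | hjk <;> simp [*]
    show 0 < 1 + r * _
    positivity
  rw [dotProduct_add, dotProduct_smul, dotProduct_single, mul_one, smul_eq_mul,
    div_mul_cancel₀ _ hk.ne'] at hlt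
  linarith

theorem exists_mem_stdSimplex_dotProduct_le {K : Type*} [Fintype K] {B : Set (K → ℝ)}
    (hB : Convex ℝ B) (hne : B.Nonempty) (c : K → ℝ) (h : ∀ y ∈ B, ∃ k, c k ≤ y k) :
    ∃ p ∈ stdSimplex ℝ K, ∀ y ∈ B, p ⬝ᵥ c ≤ p ⬝ᵥ y := by
  set O : Set (K → ℝ) := univ.pi fun _ => Ioi 0
  have hcO : c ∉ B + O := by
    rintro ⟨y, hy, o, ho, rfl⟩
    obtain ⟨k, hk⟩ := h y hy
    have : 0 < o k := ho k (mem_univ k)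
    simp only [Pi.add_apply] at hk
    linarith
  obtain ⟨ν, hν⟩ := exists_dotProduct_lt_of_convex_of_isOpen
    (hB.add (convex_pi fun _ _ => convex_Ioi 0))
    ((isOpen_set_pi finite_univ fun _ _ => isOpen_Ioi).add_left) hcO
  have hsep : ∀ y ∈ B, ∀ o : K → ℝ, (∀ k, 0 < o k) → ν ⬝ᵥ y + ν ⬝ᵥ o < ν ⬝ᵥ c :=
    fun y hy o ho => dotProduct_add ν y o ▸ hν _ (add_mem_add hy fun k _ => ho k)
  obtain ⟨y₀, hy₀⟩ := hne
  -- `B + O` is stable under adding nonnegative vectors, which forces `ν ≤ 0`.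
  have hν0 : ν ≤ 0 := nonpos_of_forall_pos_dotProduct_lt (M := ν ⬝ᵥ c - ν ⬝ᵥ y₀)
    fun o ho => by linarith [hsep y₀ hy₀ o ho]
  have hν1 : ν ⬝ᵥ 1 < 0 := by
    refine (Finset.sum_nonpos fun k _ => by simpa using hν0 k).lt_of_ne fun h0 => ?_
    have hν : ν = 0 := funext fun k => by
      simpa using (Finset.sum_eq_zero_iff_of_nonpos fun k _ => by simpa using hν0 k).1 h0 k
    simpa [hν] using hsep y₀ hy₀ 1 fun _ => one_pos
  refine ⟨(ν ⬝ᵥ 1)⁻¹ • ν, ⟨fun k => ?_, ?_⟩, fun y hy => ?_⟩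
  · exact mul_nonneg_of_nonpos_of_nonpos (inv_nonpos.2 hν1.le) (hν0 k)
  · simp [← Finset.mul_sum, ← dotProduct_one, inv_mul_cancel₀ hν1.ne]
  · rw [smul_dotProduct, smul_dotProduct, smul_eq_mul, smul_eq_mul,
      mul_le_mul_left_of_neg (inv_lt_zero.2 hν1)]
    refine le_of_forall_pos_lt_add fun ε hε => ?_
    have hlt := hsep y hy ((-ε / ν ⬝ᵥ 1) • 1) fun _ => by
      simpa using div_pos_of_neg_of_neg (neg_neg_of_pos hε) hν1
    rw [dotProduct_smul, smul_eq_mul, div_mul_cancel₀ _ hν1.ne] at hlt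
    linarith

section Simplex

variable {K : Type*} [Fintype K]

theorem dotProduct_const_of_mem_stdSimplex {p : K → ℝ} (hp : p ∈ stdSimplex ℝ K) (a : ℝ) :
    p ⬝ᵥ (fun _ => a) = a := by
  simp [dotProduct, ← Finset.sum_mul, hp.2]

theorem dotProduct_le_iSup_of_mem_stdSimplex {p : K → ℝ} (hp : p ∈ stdSimplex ℝ K)
    (a : K → ℝ) : p ⬝ᵥ a ≤ ⨆ k, a k :=
  calc p ⬝ᵥ a ≤ p ⬝ᵥ fun _ => ⨆ k, a k :=
        dotProduct_le_dotProduct_of_nonneg_left (le_ciSup (Finite.bddAbove_range a)) hp.1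
    _ = ⨆ k, a k := dotProduct_const_of_mem_stdSimplex hp _

theorem iSup_stdSimplex_iSup_dotProduct [Nonempty K] {ι : Type*} [Nonempty ι] {h : ι → K → ℝ}
    (hh : BddAbove (range h)) :
    ⨆ q : stdSimplex ℝ K, ⨆ i, (q : K → ℝ) ⬝ᵥ h i = ⨆ k, ⨆ i, h i k := by
  classical
  obtain ⟨M, hM⟩ := hh
  have hbdd : ∀ k, BddAbove (range fun i => h i k) :=
    fun k => ⟨M k, forall_mem_range.2 fun i => hM (mem_range_self i) k⟩
  have hle : ∀ (q : stdSimplex ℝ K) i, (q : K → ℝ) ⬝ᵥ h i ≤ ⨆ k, ⨆ i, h i k := fun q i =>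
    (dotProduct_le_dotProduct_of_nonneg_left (fun k => le_ciSup (hbdd k) i) q.2.1).trans
      (dotProduct_le_iSup_of_mem_stdSimplex q.2 _)
  refine le_antisymm (ciSup_le fun q => ciSup_le (hle q)) (ciSup_le fun k => ciSup_le fun i => ?_)
  let e : stdSimplex ℝ K := ⟨Pi.single k 1, single_mem_stdSimplex ℝ k⟩
  calc h i k = (e : K → ℝ) ⬝ᵥ h i := (one_mul _).symm.trans (single_dotProduct ..).symm
    _ ≤ ⨆ i, (e : K → ℝ) ⬝ᵥ h i := le_ciSup ⟨_, forall_mem_range.2 (hle e)⟩ i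
    _ ≤ _ := le_ciSup ⟨_, forall_mem_range.2 fun q => ciSup_le (hle q)⟩ e

theorem iSup_pi_sum_mul {ι : Type*} [Nonempty ι] {g : K → ι → ℝ}
    (hg : ∀ k, BddAbove (range (g k))) {p : K → ℝ} (hp : 0 ≤ p) :
    ⨆ s : K → ι, ∑ k, p k * g k (s k) = ∑ k, p k * ⨆ i, g k i := by
  have hle : ∀ s : K → ι, ∑ k, p k * g k (s k) ≤ ∑ k, p k * ⨆ i, g k i := fun s =>
    Finset.sum_le_sum fun k _ => mul_le_mul_of_nonneg_left (le_ciSup (hg k) (s k)) (hp k)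
  refine le_antisymm (ciSup_le hle) (le_of_forall_pos_le_add fun ε hε => ?_)
  have hsum : 0 ≤ ∑ k, p k := Finset.sum_nonneg fun k _ => hp k
  set δ := ε / (∑ k, p k + 1)
  have hδ : (∑ k, p k) * δ ≤ ε := by
    rw [← mul_div_assoc, div_le_iff₀ (by positivity)]
    nlinarith
  choose s hs using fun k =>
    exists_lt_of_lt_ciSup (sub_lt_self (⨆ i, g k i) (show 0 < δ by positivity))
  calc ∑ k, p k * ⨆ i, g k i ≤ ∑ k, p k * (g k (s k) + δ) :=
        Finset.sum_le_sum fun k _ => mul_le_mul_of_nonneg_left (by linarith [hs k]) (hp k)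
    _ = ∑ k, p k * g k (s k) + (∑ k, p k) * δ := by
        rw [Finset.sum_mul, ← Finset.sum_add_distrib]
        simp only [mul_add]
    _ ≤ (⨆ s : K → ι, ∑ k, p k * g k (s k)) + ε :=
        add_le_add (le_ciSup ⟨_, forall_mem_range.2 hle⟩ s) hδ

theorem iSup_stdSimplex_iSup_sum_mul_sub [Nonempty K] {ι : Type*} [Nonempty ι] {g : K → ι → ℝ}
    (hg : ∀ k, BddAbove (range (g k))) (x : K → ℝ) :
    ⨆ q : stdSimplex ℝ K, ⨆ i, ((∑ k, (q : K → ℝ) k * g k i) - ∑ k, (q : K → ℝ) k * x k) =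
      ⨆ k, ((⨆ i, g k i) - x k) := by
  choose M hM using hg
  have hh : BddAbove (range fun i => (fun k => g k i) - x) :=
    ⟨M - x, forall_mem_range.2 fun i k => sub_le_sub_right (hM k (mem_range_self i)) _⟩
  calc _ = ⨆ q : stdSimplex ℝ K, ⨆ i, (q : K → ℝ) ⬝ᵥ ((fun k => g k i) - x) := by
        simp only [dotProduct_sub]
        rfl
    _ = ⨆ k, ⨆ i, (g k i - x k) := iSup_stdSimplex_iSup_dotProduct hh
    _ = _ := by
        congr! with k
        exact (ciSup_sub ⟨M k, hM k⟩ _).symm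

end Simplex

section Duality

variable {K ι : Type*} [Fintype K] {ψ : ι → K → ℝ}

noncomputable def primalValue (ψ : ι → K → ℝ) (p : K → ℝ) : ℝ :=
  ⨅ t, p ⬝ᵥ ψ t

noncomputable def dualValue (ψ : ι → K → ℝ) (x : K → ℝ) : ℝ :=
  ⨅ t, ⨆ k, (ψ t k - x k)

theorem bddBelow_range_dotProduct (hψ : BddBelow (range ψ)) {p : K → ℝ} (hp : 0 ≤ p) :
    BddBelow (range fun t => p ⬝ᵥ ψ t) := by
  obtain ⟨m, hm⟩ := hψ
  exact ⟨p ⬝ᵥ m, forall_mem_range.2 fun t =>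
    dotProduct_le_dotProduct_of_nonneg_left (hm (mem_range_self t)) hp⟩

theorem bddBelow_range_iSup_sub [Nonempty K] (hψ : BddBelow (range ψ)) (x : K → ℝ) :
    BddBelow (range fun t => ⨆ k, (ψ t k - x k)) := by
  obtain ⟨m, hm⟩ := hψ
  let k₀ := Classical.arbitrary K
  exact ⟨m k₀ - x k₀, forall_mem_range.2 fun t =>
    (sub_le_sub_right (hm (mem_range_self t) k₀) _).trans
      (le_ciSup (f := fun k => ψ t k - x k) (Finite.bddAbove_range _) k₀)⟩

variable [Nonempty ι]

theorem primalValue_sub_le_dualValue (hψ : BddBelow (range ψ)) {p : K → ℝ}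
    (hp : p ∈ stdSimplex ℝ K) (x : K → ℝ) : primalValue ψ p - p ⬝ᵥ x ≤ dualValue ψ x :=
  le_ciInf fun t =>
    calc primalValue ψ p - p ⬝ᵥ x ≤ p ⬝ᵥ ψ t - p ⬝ᵥ x :=
          sub_le_sub_right (ciInf_le (bddBelow_range_dotProduct hψ hp.1) t) _
      _ = p ⬝ᵥ (ψ t - x) := (dotProduct_sub _ _ _).symm
      _ ≤ ⨆ k, (ψ t k - x k) := dotProduct_le_iSup_of_mem_stdSimplex hp _

theorem exists_dualValue_le [Nonempty K] (hψ : BddBelow (range ψ))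
    (hconv : Convex ℝ {y | ∃ t, ψ t ≤ y}) (x : K → ℝ) :
    ∃ p ∈ stdSimplex ℝ K, dualValue ψ x ≤ primalValue ψ p - p ⬝ᵥ x := by
  set c := dualValue ψ x
  have hbelow : ∀ y ∈ {y | ∃ t, ψ t ≤ y}, ∃ k, (x + fun _ => c : K → ℝ) k ≤ y k := by
    rintro y ⟨t, hty⟩
    obtain ⟨k, hk⟩ := exists_eq_ciSup_of_finite (f := fun k => ψ t k - x k)
    have : c ≤ ψ t k - x k := hk ▸ ciInf_le (bddBelow_range_iSup_sub hψ x) t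
    exact ⟨k, by simp only [Pi.add_apply]; linarith [hty k]⟩
  obtain ⟨p, hp, hsep⟩ := exists_mem_stdSimplex_dotProduct_le hconv
    ⟨ψ (Classical.arbitrary ι), _, le_rfl⟩ _ hbelow
  refine ⟨p, hp, le_sub_iff_add_le'.2 (le_ciInf fun t => ?_)⟩
  rw [← dotProduct_const_of_mem_stdSimplex hp c, ← dotProduct_add]
  exact hsep _ ⟨t, le_rfl⟩

theorem dualValue_eq_iSup [Nonempty K] (hψ : BddBelow (range ψ))
    (hconv : Convex ℝ {y | ∃ t, ψ t ≤ y}) (x : K → ℝ) :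
    dualValue ψ x = ⨆ p : stdSimplex ℝ K, (primalValue ψ p - (p : K → ℝ) ⬝ᵥ x) := by
  have hle := fun p : stdSimplex ℝ K => primalValue_sub_le_dualValue hψ p.2 x
  obtain ⟨p, hp, hge⟩ := exists_dualValue_le hψ hconv x
  exact le_antisymm (hge.trans (le_ciSup ⟨_, forall_mem_range.2 hle⟩ ⟨p, hp⟩)) (ciSup_le hle)

theorem primalValue_eq_iInf [Nonempty K] (hψ : BddBelow (range ψ)) {p : K → ℝ}
    (hp : p ∈ stdSimplex ℝ K) : primalValue ψ p = ⨅ x, (dualValue ψ x + x ⬝ᵥ p) := by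
  have hle : ∀ x, primalValue ψ p ≤ dualValue ψ x + x ⬝ᵥ p := fun x => by
    linarith [primalValue_sub_le_dualValue hψ hp x, dotProduct_comm x p]
  refine le_antisymm (le_ciInf hle) (le_ciInf fun t => ?_)
  have hself : dualValue ψ (ψ t) ≤ 0 :=
    (ciInf_le (bddBelow_range_iSup_sub hψ _) t).trans (by simp)
  calc ⨅ x, (dualValue ψ x + x ⬝ᵥ p) ≤ dualValue ψ (ψ t) + ψ t ⬝ᵥ p :=
        ciInf_le ⟨_, forall_mem_range.2 hle⟩ _
    _ ≤ p ⬝ᵥ ψ t := by linarith [dotProduct_comm (ψ t) p]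

end Duality

noncomputable def bestReplyPayoff {K V W : Type*} (G : K → V → W → ℝ) (S : Set V) (t : W) :
    K → ℝ :=
  fun k => ⨆ s : S, G k s t

theorem convexOn_bestReplyPayoff {K V W : Type*} [AddCommGroup W] [Module ℝ W] {S : Set V}
    {T : Set W} (hS : S.Nonempty) (hT : Convex ℝ T) {G : K → V → W → ℝ}
    (hG : ∀ k, ∀ s ∈ S, ConvexOn ℝ T (G k s))
    (hbdd : ∀ t ∈ T, ∀ k, BddAbove (range fun s : S => G k s t)) :
    ConvexOn ℝ T (bestReplyPayoff G S) := by
  have := hS.to_subtype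
  have hk : ∀ k, ConvexOn ℝ T fun t => bestReplyPayoff G S t k := fun k =>
    ConvexOn.ciSup (fun s => hG k s s.2) (fun t ht => hbdd t ht k) hT
  exact ⟨hT, fun x hx y hy a b ha hb hab k => (hk k).2 hx hy ha hb hab⟩

theorem stmt_1_general
    {K : Type*} [Fintype K] [Nonempty K]
    {V W : Type*} [AddCommGroup V] [Module ℝ V] [AddCommGroup W] [Module ℝ W]
    (S : Set V) (T : Set W) (hS : S.Nonempty) (hT : T.Nonempty)
    (hTconv : Convex ℝ T)
    (G : K → V → W → ℝ)
    (hGaff₂ : ∀ k, ∀ s ∈ S, ∀ t₁ ∈ T, ∀ t₂ ∈ T, ∀ a b : ℝ,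
      0 ≤ a → 0 ≤ b → a + b = 1 →
      G k s (a • t₁ + b • t₂) = a * G k s t₁ + b * G k s t₂)
    (C : ℝ) (hC : ∀ k, ∀ s ∈ S, ∀ t ∈ T, |G k s t| ≤ C)
    (vplus wplus : (K → ℝ) → ℝ)
    (hv : ∀ p : K → ℝ, vplus p =
      ⨅ t : T, ⨆ s : K → S, ∑ k, p k * G k (s k : V) (t : W))
    (hw : ∀ x : K → ℝ, wplus x =
      ⨅ t : T, ⨆ q : stdSimplex ℝ K, ⨆ s : S,
        ((∑ k, (q : K → ℝ) k * G k (s : V) (t : W)) - ∑ k, (q : K → ℝ) k * x k)) :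
    (∀ x : K → ℝ, wplus x =
      ⨆ p : stdSimplex ℝ K, (vplus (p : K → ℝ) - ∑ k, (p : K → ℝ) k * x k)) ∧
    (∀ p ∈ stdSimplex ℝ K,
      vplus p = ⨅ x : K → ℝ, (wplus x + ∑ k, x k * p k)) := by
  have := hS.to_subtype
  have := hT.to_subtype
  obtain ⟨s₀, hs₀⟩ := hS
  have hbdd : ∀ t ∈ T, ∀ k, BddAbove (range fun s : S => G k s t) := fun t ht k =>
    ⟨C, forall_mem_range.2 fun s => (abs_le.1 (hC k s s.2 t ht)).2⟩
  set ψ : T → K → ℝ := fun t => bestReplyPayoff G S t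
  have hψ : BddBelow (range ψ) := ⟨fun _ => -C, forall_mem_range.2 fun t k =>
    (neg_le_of_abs_le (hC k s₀ hs₀ t t.2)).trans (le_ciSup (hbdd t t.2 k) ⟨s₀, hs₀⟩)⟩
  have hGconv : ∀ k, ∀ s ∈ S, ConvexOn ℝ T (G k s) := fun k s hs =>
    ⟨hTconv, fun t₁ ht₁ t₂ ht₂ a b ha hb hab => (hGaff₂ k s hs t₁ ht₁ t₂ ht₂ a b ha hb hab).le⟩
  have hconv : Convex ℝ {y | ∃ t, ψ t ≤ y} :=
    (convexOn_bestReplyPayoff ⟨s₀, hs₀⟩ hTconv hGconv hbdd).convex_setOf_exists_le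
  have hvψ : ∀ p ∈ stdSimplex ℝ K, vplus p = primalValue ψ p := fun p hp =>
    (hv p).trans (iInf_congr fun t => iSup_pi_sum_mul (hbdd t t.2) hp.1)
  have hwψ : ∀ x, wplus x = dualValue ψ x := fun x =>
    (hw x).trans (iInf_congr fun t => iSup_stdSimplex_iSup_sum_mul_sub (hbdd t t.2) x)
  refine ⟨fun x => ?_, fun p hp => ?_⟩
  · rw [hwψ, dualValue_eq_iSup hψ hconv]
    exact iSup_congr fun p => by rw [hvψ p p.2]; rfl
  · rw [hvψ p hp, primalValue_eq_iInf hψ hp]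
    exact iInf_congr fun x => by rw [hwψ]; rfl

/-- conjugacy between the minmax `v⁺` of the primal game and the
minmax `w⁺` of the dual game: `w⁺ = (v⁺)♯` (sup over the simplex, since `v⁺` is
extended by `−∞` outside it) and `v⁺ = (w⁺)♭` on the simplex. -/
theorem stmt_1
    {K : Type*} [Fintype K] [Nonempty K]
    {V W : Type*} [AddCommGroup V] [Module ℝ V] [AddCommGroup W] [Module ℝ W]
    (S : Set V) (T : Set W) (hS : S.Nonempty) (hT : T.Nonempty)
    (hSconv : Convex ℝ S) (hTconv : Convex ℝ T)
    (G : K → V → W → ℝ)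
    (hGaff₁ : ∀ k, ∀ t ∈ T, ∀ s₁ ∈ S, ∀ s₂ ∈ S, ∀ a b : ℝ,
      0 ≤ a → 0 ≤ b → a + b = 1 →
      G k (a • s₁ + b • s₂) t = a * G k s₁ t + b * G k s₂ t)
    (hGaff₂ : ∀ k, ∀ s ∈ S, ∀ t₁ ∈ T, ∀ t₂ ∈ T, ∀ a b : ℝ,
      0 ≤ a → 0 ≤ b → a + b = 1 →
      G k s (a • t₁ + b • t₂) = a * G k s t₁ + b * G k s t₂)
    (C : ℝ) (hC : ∀ k, ∀ s ∈ S, ∀ t ∈ T, |G k s t| ≤ C)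
    (vplus wplus : (K → ℝ) → ℝ)
    (hv : ∀ p : K → ℝ, vplus p =
      ⨅ t : T, ⨆ s : K → S, ∑ k, p k * G k (s k : V) (t : W))
    (hw : ∀ x : K → ℝ, wplus x =
      ⨅ t : T, ⨆ q : stdSimplex ℝ K, ⨆ s : S,
        ((∑ k, (q : K → ℝ) k * G k (s : V) (t : W)) - ∑ k, (q : K → ℝ) k * x k)) :
    (∀ x : K → ℝ, wplus x =
      ⨆ p : stdSimplex ℝ K, (vplus (p : K → ℝ) - ∑ k, (p : K → ℝ) k * x k)) ∧
    (∀ p ∈ stdSimplex ℝ K,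
      vplus p = ⨅ x : K → ℝ, (wplus x + ∑ k, x k * p k)) :=
  stmt_1_general S T hS hT hTconv G hGaff₂ C hC vplus wplus hv hw
end

section
/- Let p∈Δ(K), let x∈∂^+v^+(p) (a supergradient of the minmax v^+ at p, where v^+ is extended by −∞ outside Δ(K)), let ε≥0, and let t_ε∈T be ε-optimal for player 2 in the dual game 𝒟[𝒢](x), i.e. sup_{(q,s)∈Δ(K)×S} h[x](q,s,t_ε) ≤ w^+(x) + ε. Then t_ε is ε-optimal for player 2 in the primal game 𝒢(p), i.e. sup_{ŝ∈S^K} γ(p,ŝ,t_ε) ≤ v^+(p) + ε. -/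
/-!
Write `σₖ(t) = ⨆ s, Gᵏ(s, t)`. Against a fixed `t`, player 1 gets `⟨p, σ(t)⟩` in `𝒢(p)` and at
least `maxₖ (σₖ(t) - xₖ)` in `𝒟[𝒢](x)`, so `⨆ ŝ, γ(p, ŝ, tε) ≤ ⟨p, x⟩ + w⁺(x) + ε`, and it remains
to show `w⁺(x) ≤ v⁺(p) - ⟨p, x⟩`. The supergradient inequality says that `c = v⁺(p) - ⟨p, x⟩`
bounds `v⁺(q) - ⟨q, x⟩` for every `q ∈ Δ(K)`. If some `c' > c` lay below `w⁺(x)`, the point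
`x + c'·𝟙` would lie outside the open convex upper set `{y | ∃ t, σ(t) < y}` (convex because each
`σₖ` is convex in `t`); a separating functional, normalised to some `q ∈ Δ(K)`, then gives
`v⁺(q) = ⨅ t, ⟨q, σ(t)⟩ ≥ ⟨q, x⟩ + c'`, a contradiction.
-/

open Set

section StdSimplex

variable {K : Type*} [Fintype K]

theorem dotProduct_const_of_mem_stdSimplex_s3 {q : K → ℝ} (hq : q ∈ stdSimplex ℝ K) (c : ℝ) :
    q ⬝ᵥ Function.const K c = c := by
  simp [dotProduct, ← Finset.sum_mul, hq.2]

theorem dotProduct_le_of_mem_stdSimplex {q a : K → ℝ} {c : ℝ} (hq : q ∈ stdSimplex ℝ K)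
    (ha : ∀ k, a k ≤ c) : q ⬝ᵥ a ≤ c :=
  (dotProduct_le_dotProduct_of_nonneg_left ha hq.1).trans_eq
    (dotProduct_const_of_mem_stdSimplex_s3 hq c)

theorem dotProduct_add_const_of_mem_stdSimplex {q : K → ℝ} (hq : q ∈ stdSimplex ℝ K)
    (y : K → ℝ) (c : ℝ) : q ⬝ᵥ (y + Function.const K c) = q ⬝ᵥ y + c := by
  rw [dotProduct_add, dotProduct_const_of_mem_stdSimplex_s3 hq]

theorem exists_mem_stdSimplex_dotProduct_lt {O : Set (K → ℝ)} (hOo : IsOpen O)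
    (hOc : Convex ℝ O) (hOu : IsUpperSet O) (hOne : O.Nonempty) {z : K → ℝ} (hz : z ∉ O) :
    ∃ q ∈ stdSimplex ℝ K, ∀ y ∈ O, q ⬝ᵥ z < q ⬝ᵥ y := by
  classical
  obtain ⟨f, hf⟩ := geometric_hahn_banach_open_point hOc hOo hz
  obtain ⟨y₀, hy₀⟩ := hOne
  set g : K → ℝ := fun k => -f (Pi.single k 1)
  have hfg : ∀ y, f y = -(g ⬝ᵥ y) := by
    intro y
    conv_lhs => rw [pi_eq_sum_univ' y, map_sum]
    simp [g, dotProduct, mul_comm]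
  -- `f` cannot increase along a coordinate direction, since `O` is an upper set
  have hg : 0 ≤ g := by
    intro k
    by_contra! hk
    set M := (f z - f y₀) / -g k
    have hM : 0 ≤ M := div_nonneg (sub_nonneg.2 (hf y₀ hy₀).le) (neg_nonneg.2 hk.le)
    have hmem : y₀ + M • Pi.single k 1 ∈ O :=
      hOu (le_add_of_nonneg_right (smul_nonneg hM (Pi.single_nonneg.2 zero_le_one))) hy₀
    have := hf _ hmem
    rw [map_add, map_smul, smul_eq_mul, show f (Pi.single k 1) = -g k by simp [g],
      div_mul_cancel₀ _ (neg_ne_zero.2 hk.ne)] at this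
    linarith
  have hg_sum : 0 < ∑ k, g k := by
    refine (Finset.sum_nonneg fun k _ => hg k).lt_of_ne fun h => ?_
    have hg0 : g = 0 := funext fun k =>
      (Finset.sum_eq_zero_iff_of_nonneg fun k _ => hg k).1 h.symm k (Finset.mem_univ k)
    have := hf y₀ hy₀
    simp [hfg, hg0] at this
  refine ⟨(∑ k, g k)⁻¹ • g, ⟨fun k => ?_, ?_⟩, fun y hy => ?_⟩
  · exact mul_nonneg (inv_nonneg.2 hg_sum.le) (hg k)
  · simp [← Finset.mul_sum, hg_sum.ne']
  · have := hf y hy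
    rw [hfg, hfg] at this
    simp only [smul_dotProduct, smul_eq_mul]
    exact mul_lt_mul_of_pos_left (by linarith) (inv_pos.2 hg_sum)

end StdSimplex

section StrictUpperClosure

variable {K W : Type*}

def strictUpperClosure (T : Set W) (f : K → W → ℝ) : Set (K → ℝ) :=
  {y | ∃ t ∈ T, ∀ k, f k t < y k}

variable {T : Set W} {f : K → W → ℝ}

theorem isOpen_strictUpperClosure [Finite K] : IsOpen (strictUpperClosure T f) := by
  have : strictUpperClosure T f = ⋃ t ∈ T, ⋂ k, {y | f k t < y k} := by
    ext; simp [strictUpperClosure]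
  rw [this]
  exact isOpen_biUnion fun t _ => isOpen_iInter_of_finite fun k =>
    isOpen_lt continuous_const (continuous_apply k)

theorem isUpperSet_strictUpperClosure : IsUpperSet (strictUpperClosure T f) :=
  fun _ _ hyy' ⟨t, ht, hy⟩ => ⟨t, ht, fun k => (hy k).trans_le (hyy' k)⟩

theorem strictUpperClosure_nonempty (hT : T.Nonempty) : (strictUpperClosure T f).Nonempty :=
  let ⟨t, ht⟩ := hT
  ⟨fun k => f k t + 1, t, ht, fun _ => lt_add_one _⟩

theorem convex_strictUpperClosure [AddCommGroup W] [Module ℝ W] (hT : Convex ℝ T)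
    (hf : ∀ k, ConvexOn ℝ T (f k)) : Convex ℝ (strictUpperClosure T f) := by
  rintro y₁ ⟨t₁, ht₁, hy₁⟩ y₂ ⟨t₂, ht₂, hy₂⟩ a b ha hb hab
  refine ⟨a • t₁ + b • t₂, hT ht₁ ht₂ ha hb hab, fun k => ?_⟩
  exact ((hf k).convex_strict_epigraph (x := (t₁, y₁ k)) ⟨ht₁, hy₁ k⟩
    (y := (t₂, y₂ k)) ⟨ht₂, hy₂ k⟩ ha hb hab).2

theorem dotProduct_le_of_forall_mem_strictUpperClosure [Fintype K] {q z : K → ℝ}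
    (hq : q ∈ stdSimplex ℝ K) (hz : ∀ y ∈ strictUpperClosure T f, q ⬝ᵥ z < q ⬝ᵥ y)
    {t : W} (ht : t ∈ T) : q ⬝ᵥ z ≤ q ⬝ᵥ fun k => f k t := by
  refine le_of_forall_pos_lt_add fun η hη => ?_
  rw [← dotProduct_add_const_of_mem_stdSimplex hq]
  exact hz _ ⟨t, ht, fun k => lt_add_of_pos_right _ hη⟩

end StrictUpperClosure

noncomputable section Game

variable {K V W : Type*}

variable (S : Set V) (G : K → V → W → ℝ)

def supPayoff (k : K) (t : W) : ℝ := ⨆ s : S, G k s t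

/-- `⨆ ŝ, γ(p, ŝ, t)` in the paper's notation. -/
def primalSupPayoff [Fintype K] (p : K → ℝ) (t : W) : ℝ :=
  ⨆ s : K → S, p ⬝ᵥ fun k => G k (s k) t

/-- `⨆ (q, s), h[x](q, s, t)` in the paper's notation. -/
def dualSupPayoff [Fintype K] (x : K → ℝ) (t : W) : ℝ :=
  ⨆ q : stdSimplex ℝ K, ⨆ s : S, ((q : K → ℝ) ⬝ᵥ fun k => G k s t) - (q : K → ℝ) ⬝ᵥ x

variable {S G} {t : W}

theorem bddAbove_range_of_abs_le {T : Set W} {C : ℝ}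
    (hC : ∀ k, ∀ s ∈ S, ∀ t ∈ T, |G k s t| ≤ C) :
    ∀ t ∈ T, ∀ k, BddAbove (range fun s : S => G k s t) := fun t ht k =>
  ⟨C, by rintro _ ⟨s, rfl⟩; exact (abs_le.1 (hC k s s.2 t ht)).2⟩

theorem convexOn_supPayoff [AddCommGroup W] [Module ℝ W] [Nonempty S] {T : Set W} {k : K}
    (hG : ∀ s ∈ S, ConvexOn ℝ T (G k s))
    (hbdd : ∀ t ∈ T, BddAbove (range fun s : S => G k s t)) : ConvexOn ℝ T (supPayoff S G k) := by
  refine ⟨(hG _ (Classical.arbitrary S).2).1,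
    fun t₁ ht₁ t₂ ht₂ a b ha hb hab => ciSup_le fun s => ?_⟩
  calc G k s (a • t₁ + b • t₂) ≤ a • G k s t₁ + b • G k s t₂ := (hG s s.2).2 ht₁ ht₂ ha hb hab
    _ ≤ a • supPayoff S G k t₁ + b • supPayoff S G k t₂ := by
      gcongr
      exacts [le_ciSup (hbdd t₁ ht₁) s, le_ciSup (hbdd t₂ ht₂) s]

theorem primalSupPayoff_eq [Fintype K] [Nonempty S]
    (hbdd : ∀ k, BddAbove (range fun s : S => G k s t)) {p : K → ℝ} (hp : p ∈ stdSimplex ℝ K) :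
    primalSupPayoff S G p t = p ⬝ᵥ fun k => supPayoff S G k t := by
  refine le_antisymm (ciSup_le fun s => dotProduct_le_dotProduct_of_nonneg_left
    (fun k => le_ciSup (hbdd k) (s k)) hp.1) (le_of_forall_pos_le_add fun η hη => ?_)
  choose s hs using fun k => exists_lt_of_lt_ciSup (sub_lt_self (supPayoff S G k t) hη)
  have hbdd' : BddAbove (range fun s : K → S => p ⬝ᵥ fun k => G k (s k) t) := by
    choose M hM using hbdd
    exact ⟨p ⬝ᵥ M, by
      rintro _ ⟨s, rfl⟩
      exact dotProduct_le_dotProduct_of_nonneg_left (fun k => hM k ⟨s k, rfl⟩) hp.1⟩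
  calc (p ⬝ᵥ fun k => supPayoff S G k t)
      ≤ p ⬝ᵥ ((fun k => G k (s k) t) + Function.const K η) :=
        dotProduct_le_dotProduct_of_nonneg_left (fun k => by
          simp only [Pi.add_apply, Function.const_apply]; linarith [hs k]) hp.1
    _ = (p ⬝ᵥ fun k => G k (s k) t) + η := dotProduct_add_const_of_mem_stdSimplex hp _ _
    _ ≤ primalSupPayoff S G p t + η := by gcongr; exact le_ciSup hbdd' s

theorem dualPayoff_le_dotProduct_supPayoff [Fintype K]
    (hbdd : ∀ k, BddAbove (range fun s : S => G k s t)) {q : K → ℝ} (hq : q ∈ stdSimplex ℝ K)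
    (x : K → ℝ) (s : S) :
    ((q ⬝ᵥ fun k => G k s t) - q ⬝ᵥ x) ≤ q ⬝ᵥ fun k => supPayoff S G k t - x k := by
  rw [← dotProduct_sub]
  exact dotProduct_le_dotProduct_of_nonneg_left
    (fun k => sub_le_sub_right (le_ciSup (hbdd k) s) _) hq.1

theorem dualSupPayoff_le [Fintype K] [Nonempty K] [Nonempty S]
    (hbdd : ∀ k, BddAbove (range fun s : S => G k s t)) {x : K → ℝ} {c : ℝ}
    (hc : ∀ k, supPayoff S G k t - x k ≤ c) : dualSupPayoff S G x t ≤ c := by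
  classical
  have : Nonempty (stdSimplex ℝ K) :=
    ⟨⟨_, single_mem_stdSimplex ℝ (Classical.arbitrary K)⟩⟩
  exact ciSup_le fun q => ciSup_le fun s =>
    (dualPayoff_le_dotProduct_supPayoff hbdd q.2 x s).trans
      (dotProduct_le_of_mem_stdSimplex q.2 hc)

theorem supPayoff_sub_le_dualSupPayoff [Fintype K] [Nonempty S]
    (hbdd : ∀ k, BddAbove (range fun s : S => G k s t)) (x : K → ℝ) (k : K) :
    supPayoff S G k t - x k ≤ dualSupPayoff S G x t := by
  classical
  obtain ⟨M, hM⟩ := (finite_range fun k => supPayoff S G k t - x k).bddAbove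
  have hM' : ∀ j, supPayoff S G j t - x j ≤ M := fun j => hM ⟨j, rfl⟩
  have hinner : ∀ q : stdSimplex ℝ K, BddAbove (range fun s : S =>
      ((q : K → ℝ) ⬝ᵥ fun k => G k s t) - (q : K → ℝ) ⬝ᵥ x) := fun q =>
    ⟨M, by
      rintro _ ⟨s, rfl⟩
      exact (dualPayoff_le_dotProduct_supPayoff hbdd q.2 x s).trans
        (dotProduct_le_of_mem_stdSimplex q.2 hM')⟩
  have houter : BddAbove (range fun q : stdSimplex ℝ K => ⨆ s : S,
      ((q : K → ℝ) ⬝ᵥ fun k => G k s t) - (q : K → ℝ) ⬝ᵥ x) :=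
    ⟨M, by
      rintro _ ⟨q, rfl⟩
      exact ciSup_le fun s => (dualPayoff_le_dotProduct_supPayoff hbdd q.2 x s).trans
        (dotProduct_le_of_mem_stdSimplex q.2 hM')⟩
  let e : stdSimplex ℝ K := ⟨_, single_mem_stdSimplex ℝ k⟩
  refine sub_le_iff_le_add.2 (ciSup_le fun s => sub_le_iff_le_add.1 ?_)
  calc G k s t - x k = ((e : K → ℝ) ⬝ᵥ fun j => G j s t) - (e : K → ℝ) ⬝ᵥ x := by
        simp [e, single_dotProduct]
    _ ≤ dualSupPayoff S G x t := (le_ciSup (hinner e) s).trans (le_ciSup houter e)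

end Game

theorem iInf_dualSupPayoff_le {K V W : Type*} [Fintype K] [AddCommGroup W] [Module ℝ W]
    {S : Set V} {T : Set W} {G : K → V → W → ℝ} [Nonempty K] [Nonempty S] [Nonempty T]
    (hT : Convex ℝ T) (hG : ∀ k, ∀ s ∈ S, ConvexOn ℝ T (G k s)) {C : ℝ}
    (hC : ∀ k, ∀ s ∈ S, ∀ t ∈ T, |G k s t| ≤ C) {x : K → ℝ} {c : ℝ}
    (hc : ∀ q ∈ stdSimplex ℝ K, (⨅ t : T, primalSupPayoff S G q t) - q ⬝ᵥ x ≤ c) :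
    ⨅ t : T, dualSupPayoff S G x t ≤ c := by
  have hbdd := bddAbove_range_of_abs_le hC
  refine le_of_forall_gt_imp_ge_of_dense fun c' hc' => ?_
  have hz : x + Function.const K c' ∈ strictUpperClosure T (supPayoff S G) := by
    by_contra hz
    obtain ⟨q, hq, hsep⟩ := exists_mem_stdSimplex_dotProduct_lt isOpen_strictUpperClosure
      (convex_strictUpperClosure hT fun k => convexOn_supPayoff (hG k) fun t ht => hbdd t ht k)
      isUpperSet_strictUpperClosure (strictUpperClosure_nonempty (nonempty_coe_sort.1 ‹_›)) hz
    have hv : q ⬝ᵥ (x + Function.const K c') ≤ ⨅ t : T, primalSupPayoff S G q t :=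
      le_ciInf fun t => (dotProduct_le_of_forall_mem_strictUpperClosure hq hsep t.2).trans
        (primalSupPayoff_eq (hbdd t t.2) hq).ge
    rw [dotProduct_add_const_of_mem_stdSimplex hq] at hv
    linarith [hc q hq]
  obtain ⟨t, ht, hlt⟩ := hz
  have hbddBelow : BddBelow (range fun t : T => dualSupPayoff S G x t) := by
    obtain ⟨k, ⟨s, hs⟩⟩ := (inferInstance : Nonempty (K × S))
    refine ⟨-C - x k, ?_⟩
    rintro _ ⟨t, rfl⟩
    calc -C - x k ≤ G k s t - x k := by linarith [(abs_le.1 (hC k s hs t t.2)).1]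
      _ ≤ supPayoff S G k t - x k := by gcongr; exact le_ciSup (hbdd t t.2 k) ⟨s, hs⟩
      _ ≤ dualSupPayoff S G x t := supPayoff_sub_le_dualSupPayoff (hbdd t t.2) x k
  calc ⨅ t : T, dualSupPayoff S G x t ≤ dualSupPayoff S G x t := ciInf_le hbddBelow ⟨t, ht⟩
    _ ≤ c' := dualSupPayoff_le (hbdd t ht) fun k => by
      linarith [show supPayoff S G k t < x k + c' from hlt k]

theorem stmt_3_general
    {K : Type*} [Fintype K]
    {V W : Type*} [AddCommGroup V] [Module ℝ V] [AddCommGroup W] [Module ℝ W]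
    (S : Set V) (T : Set W) (hS : S.Nonempty)
    (hTconv : Convex ℝ T)
    (G : K → V → W → ℝ)
    (hGaff₂ : ∀ k, ∀ s ∈ S, ∀ t₁ ∈ T, ∀ t₂ ∈ T, ∀ a b : ℝ,
      0 ≤ a → 0 ≤ b → a + b = 1 →
      G k s (a • t₁ + b • t₂) = a * G k s t₁ + b * G k s t₂)
    (C : ℝ) (hC : ∀ k, ∀ s ∈ S, ∀ t ∈ T, |G k s t| ≤ C)
    (vplus wplus : (K → ℝ) → ℝ)
    (hv : ∀ p : K → ℝ, vplus p =
      ⨅ t : T, ⨆ s : K → S, ∑ k, p k * G k (s k : V) (t : W))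
    (hw : ∀ x : K → ℝ, wplus x =
      ⨅ t : T, ⨆ q : stdSimplex ℝ K, ⨆ s : S,
        ((∑ k, (q : K → ℝ) k * G k (s : V) (t : W)) - ∑ k, (q : K → ℝ) k * x k))
    (p : K → ℝ) (hp : p ∈ stdSimplex ℝ K)
    (x : K → ℝ)
    (hx : ∀ p' ∈ stdSimplex ℝ K,
      vplus p' ≤ vplus p + ∑ k, x k * (p' k - p k))
    (ε : ℝ)
    (tε : T)
    (htε : (⨆ q : stdSimplex ℝ K, ⨆ s : S,
        ((∑ k, (q : K → ℝ) k * G k (s : V) (tε : W)) -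
          ∑ k, (q : K → ℝ) k * x k)) ≤ wplus x + ε) :
    (⨆ s : K → S, ∑ k, p k * G k (s k : V) (tε : W)) ≤ vplus p + ε := by
  have : Nonempty K := not_isEmpty_iff.1 fun _ => by simp [stdSimplex_of_isEmpty_index] at hp
  have : Nonempty S := hS.to_subtype
  have : Nonempty T := ⟨tε⟩
  have hv' (q : K → ℝ) : vplus q = ⨅ t : T, primalSupPayoff S G q t := hv q
  have hw' : wplus x = ⨅ t : T, dualSupPayoff S G x t := hw x
  have hbdd := bddAbove_range_of_abs_le hC tε tε.2
  have hconv : ∀ k, ∀ s ∈ S, ConvexOn ℝ T (G k s) := fun k s hs =>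
    ⟨hTconv, fun t₁ ht₁ t₂ ht₂ a b ha hb hab => (hGaff₂ k s hs t₁ ht₁ t₂ ht₂ a b ha hb hab).le⟩
  have hdual : wplus x ≤ vplus p - p ⬝ᵥ x := by
    refine hw' ▸ iInf_dualSupPayoff_le hTconv hconv hC fun q hq => ?_
    have hsub : ∑ k, x k * (q k - p k) = q ⬝ᵥ x - p ⬝ᵥ x := by
      change x ⬝ᵥ (q - p) = _
      rw [dotProduct_sub, dotProduct_comm x q, dotProduct_comm x p]
    linarith [hx q hq, hv' q, hv' p]
  calc primalSupPayoff S G p tε = p ⬝ᵥ fun k => supPayoff S G k tε := primalSupPayoff_eq hbdd hp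
    _ ≤ dualSupPayoff S G x tε + p ⬝ᵥ x := by
      rw [← sub_le_iff_le_add, ← dotProduct_sub]
      exact dotProduct_le_of_mem_stdSimplex hp (supPayoff_sub_le_dualSupPayoff hbdd x)
    _ ≤ vplus p + ε := by linarith [show dualSupPayoff S G x tε ≤ wplus x + ε from htε]

/-- if `x` is a supergradient of `v⁺` at `p ∈ Δ(K)` (with `v⁺`
extended by `−∞` outside `Δ(K)`, so the supergradient property need only be
tested on `Δ(K)`), then any `ε`-optimal strategy `tε` of player 2 in the dual
game `𝒟[𝒢](x)` is `ε`-optimal for player 2 in the primal game `𝒢(p)`. -/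
theorem stmt_3
    {K : Type*} [Fintype K] [Nonempty K]
    {V W : Type*} [AddCommGroup V] [Module ℝ V] [AddCommGroup W] [Module ℝ W]
    (S : Set V) (T : Set W) (hS : S.Nonempty) (hT : T.Nonempty)
    (hSconv : Convex ℝ S) (hTconv : Convex ℝ T)
    (G : K → V → W → ℝ)
    (hGaff₁ : ∀ k, ∀ t ∈ T, ∀ s₁ ∈ S, ∀ s₂ ∈ S, ∀ a b : ℝ,
      0 ≤ a → 0 ≤ b → a + b = 1 →
      G k (a • s₁ + b • s₂) t = a * G k s₁ t + b * G k s₂ t)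
    (hGaff₂ : ∀ k, ∀ s ∈ S, ∀ t₁ ∈ T, ∀ t₂ ∈ T, ∀ a b : ℝ,
      0 ≤ a → 0 ≤ b → a + b = 1 →
      G k s (a • t₁ + b • t₂) = a * G k s t₁ + b * G k s t₂)
    (C : ℝ) (hC : ∀ k, ∀ s ∈ S, ∀ t ∈ T, |G k s t| ≤ C)
    (vplus wplus : (K → ℝ) → ℝ)
    (hv : ∀ p : K → ℝ, vplus p =
      ⨅ t : T, ⨆ s : K → S, ∑ k, p k * G k (s k : V) (t : W))
    (hw : ∀ x : K → ℝ, wplus x =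
      ⨅ t : T, ⨆ q : stdSimplex ℝ K, ⨆ s : S,
        ((∑ k, (q : K → ℝ) k * G k (s : V) (t : W)) - ∑ k, (q : K → ℝ) k * x k))
    (p : K → ℝ) (hp : p ∈ stdSimplex ℝ K)
    (x : K → ℝ)
    (hx : ∀ p' ∈ stdSimplex ℝ K,
      vplus p' ≤ vplus p + ∑ k, x k * (p' k - p k))
    (ε : ℝ) (hε : 0 ≤ ε)
    (tε : T)
    (htε : (⨆ q : stdSimplex ℝ K, ⨆ s : S,
        ((∑ k, (q : K → ℝ) k * G k (s : V) (tε : W)) -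
          ∑ k, (q : K → ℝ) k * x k)) ≤ wplus x + ε) :
    (⨆ s : K → S, ∑ k, p k * G k (s k : V) (tε : W)) ≤ vplus p + ε :=
  stmt_3_general S T hS hTconv G hGaff₂ C hC vplus wplus hv hw p hp x hx ε tε htε
end

section
/- Let π∈Δ(K×L) and let p∈Δ(K), Q∈Δ(L)^K be such that π = p⊗Q. Let x∈∂^+v_Q^+(p) (a supergradient at p of the minmax v_Q^+ of the intermediate game, extended by −∞ outside Δ(K)), let ε≥0, and let t̂_ε∈T^L satisfy sup_{(q,s)∈Δ(K)×S} h_Q[x](q,s,t̂_ε) ≤ w_Q^+(x) + ε. Then t̂_ε is ε-optimal for player 2 in the primal game 𝒢(π): sup_{ŝ∈S^K} γ(π,ŝ,t̂_ε) ≤ v^+(π) + ε. -/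
/-!
Player 1 chooses one action per type, so with `A_k(t̂) := sup_s G_Q^k(s, t̂)` everything
decomposes over `k`: the primal payoff against `t̂` is `∑ p^k A_k(t̂)`,
`v_Q⁺(p') = inf_t̂ ∑ p'^k A_k(t̂)`, and player 1's best dual payoff against `t̂` is
`max_k (A_k(t̂) - x^k)`. Hence the primal payoff of `t̂_ε` is at most `⟨p, x⟩ + w_Q⁺(x) + ε`, and it
remains to show `w_Q⁺(x) ≤ v_Q⁺(p) - ⟨p, x⟩`. Each `A_k` is convex in `t̂`, so Sion's minimax
theorem (the compact simplex against the convex set of vectors dominating some `(A_k(t̂))_k`)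
gives `q ∈ Δ(K)` with `w_Q⁺(x) ≤ v_Q⁺(q) - ⟨q, x⟩`, and the supergradient inequality bounds the
right-hand side by `v_Q⁺(p) - ⟨p, x⟩`.
-/

open Finset Set

theorem ciSup_pi_sum_mul {ι α : Type*} [Fintype ι] [Nonempty α] {c : ι → ℝ} (hc : ∀ k, 0 ≤ c k)
    {g : ι → α → ℝ} (hg : ∀ k, BddAbove (range (g k))) :
    ⨆ a : ι → α, ∑ k, c k * g k (a k) = ∑ k, c k * ⨆ y, g k y := by
  have hle (a : ι → α) : ∑ k, c k * g k (a k) ≤ ∑ k, c k * ⨆ y, g k y :=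
    sum_le_sum fun k _ => mul_le_mul_of_nonneg_left (le_ciSup (hg k) (a k)) (hc k)
  refine le_antisymm (ciSup_le hle) (le_of_forall_pos_le_add fun δ hδ => ?_)
  set δ' := δ / (∑ k, c k + 1)
  have hc_sum : 0 ≤ ∑ k, c k := sum_nonneg fun k _ => hc k
  have hδ' : δ' * ∑ k, c k ≤ δ := by
    rw [div_mul_eq_mul_div, div_le_iff₀ (by positivity)]
    nlinarith
  choose a ha using fun k =>
    exists_lt_of_lt_ciSup (sub_lt_self (⨆ y, g k y) (by positivity : 0 < δ'))
  calc ∑ k, c k * ⨆ y, g k y ≤ ∑ k, c k * (g k (a k) + δ') :=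
        sum_le_sum fun k _ => mul_le_mul_of_nonneg_left (by linarith [ha k]) (hc k)
    _ = ∑ k, c k * g k (a k) + δ' * ∑ k, c k := by
        rw [mul_sum, ← sum_add_distrib]
        exact sum_congr rfl fun k _ => by ring
    _ ≤ (⨆ a : ι → α, ∑ k, c k * g k (a k)) + δ :=
        add_le_add (le_ciSup ⟨_, forall_mem_range.2 hle⟩ a) hδ'

theorem ciSup_stdSimplex_ciSup_sum_mul {ι β : Type*} [Fintype ι] [Nonempty ι] [Nonempty β]
    {h : ι → β → ℝ} (hh : ∀ k, BddAbove (range (h k))) :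
    ⨆ q : stdSimplex ℝ ι, ⨆ b, ∑ k, (q : ι → ℝ) k * h k b =
      univ.sup' univ_nonempty fun k => ⨆ b, h k b := by
  classical
  set M := univ.sup' univ_nonempty fun k => ⨆ b, h k b
  have hle (q : stdSimplex ℝ ι) (b : β) : ∑ k, (q : ι → ℝ) k * h k b ≤ M :=
    calc ∑ k, (q : ι → ℝ) k * h k b ≤ ∑ k, (q : ι → ℝ) k * M :=
          sum_le_sum fun k _ => mul_le_mul_of_nonneg_left
            ((le_ciSup (hh k) b).trans (le_sup' (fun k => ⨆ b, h k b) (mem_univ k))) (q.2.1 k)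
      _ = M := by rw [← sum_mul, show ∑ k, (q : ι → ℝ) k = 1 from q.2.2, one_mul]
  refine le_antisymm (ciSup_le fun q => ciSup_le (hle q)) ?_
  obtain ⟨k, -, hk⟩ := univ.exists_mem_eq_sup' univ_nonempty fun k => ⨆ b, h k b
  rw [show M = ⨆ b, h k b from hk]
  refine ciSup_le fun b => ?_
  have hvertex : h k b = ∑ j, (Pi.single k 1 : ι → ℝ) j * h j b := by simp [Pi.single_apply]
  rw [hvertex]
  exact (le_ciSup (f := fun b => ∑ j, (Pi.single k 1 : ι → ℝ) j * h j b)
      ⟨M, forall_mem_range.2 (hle ⟨_, single_mem_stdSimplex ℝ k⟩)⟩ b).trans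
    (le_ciSup (f := fun q : stdSimplex ℝ ι => ⨆ b, ∑ j, (q : ι → ℝ) j * h j b)
      ⟨M, forall_mem_range.2 fun q => ciSup_le (hle q)⟩ ⟨_, single_mem_stdSimplex ℝ k⟩)

theorem exists_mem_stdSimplex_forall_le_sum_mul {ι : Type*} [Fintype ι] [Nonempty ι]
    {E : Set (ι → ℝ)} (hE : Convex ℝ E) {w : ℝ} (hw : ∀ y ∈ E, ∃ k, w ≤ y k) :
    ∃ q ∈ stdSimplex ℝ ι, ∀ y ∈ E, w ≤ ∑ k, q k * y k := by
  classical
  -- In `EReal`, `Sion.minimax'` gives `inf sup = sup inf` without any boundedness assumption.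
  set f : (ι → ℝ) → (ι → ℝ) → EReal := fun q y => ((-∑ k, q k * y k : ℝ) : EReal)
  have hcont_left (y) : Continuous (f · y) := continuous_coe_real_ereal.comp (by fun_prop)
  have hcont_right (q) : Continuous (f q) := continuous_coe_real_ereal.comp (by fun_prop)
  have hlin_left (y : ι → ℝ) : QuasilinearOn ℝ (stdSimplex ℝ ι) (f · y) := by
    have h := (-Fintype.linearCombination ℝ y).convexOn (convex_stdSimplex ℝ ι)
    have h' := (-Fintype.linearCombination ℝ y).concaveOn (convex_stdSimplex ℝ ι)
    convert QuasilinearOn.monotone_comp EReal.coe_strictMono.monotone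
      ⟨h.quasiconvexOn, h'.quasiconcaveOn⟩ using 2
    · rfl
    · simp [f, Fintype.linearCombination_apply, mul_comm]
  have hlin_right (q : ι → ℝ) : QuasilinearOn ℝ E (f q) := by
    have h := (-Fintype.linearCombination ℝ q).convexOn hE
    have h' := (-Fintype.linearCombination ℝ q).concaveOn hE
    convert QuasilinearOn.monotone_comp EReal.coe_strictMono.monotone
      ⟨h.quasiconvexOn, h'.quasiconcaveOn⟩ using 2
    · rfl
    · funext y
      simp [f, Fintype.linearCombination_apply, mul_comm]
  have hX : (stdSimplex ℝ ι).Nonempty := ⟨_, single_mem_stdSimplex ℝ (Classical.arbitrary ι)⟩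
  have hminimax := Sion.minimax' hX (convex_stdSimplex ℝ ι) (isCompact_stdSimplex ℝ ι)
    (fun y _ => (hcont_left y).lowerSemicontinuous.lowerSemicontinuousOn _)
    (fun y _ => (hlin_left y).1) hE
    (fun q _ => (hcont_right q).upperSemicontinuous.upperSemicontinuousOn _)
    (fun q _ => (hlin_right q).2)
  obtain ⟨q, hq, hmin⟩ := (lowerSemicontinuousOn_biSup fun y (_ : y ∈ E) =>
    (hcont_left y).lowerSemicontinuous.lowerSemicontinuousOn _).exists_isMinOn hX
      (isCompact_stdSimplex ℝ ι)
  have hvertex : ⨆ y ∈ E, ⨅ q ∈ stdSimplex ℝ ι, f q y ≤ (-w : ℝ) := by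
    refine iSup₂_le fun y hy => ?_
    obtain ⟨k, hk⟩ := hw y hy
    refine (biInf_le _ (single_mem_stdSimplex ℝ k)).trans ?_
    simpa [f, Pi.single_apply] using hk
  have hq_le : ⨆ y ∈ E, f q y ≤ (-w : ℝ) :=
    (le_iInf₂ fun q' hq' => hmin hq').trans (hminimax.trans_le hvertex)
  refine ⟨q, hq, fun y hy => ?_⟩
  simpa [f] using (le_iSup₂ (f := fun y (_ : y ∈ E) => f q y) y hy).trans hq_le

theorem exists_mem_stdSimplex_forall_le_sum_mul_of_convexLike {ι τ : Type*} [Fintype ι]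
    [Nonempty ι] {B : ι → τ → ℝ}
    (hB : ∀ t₁ t₂ (a b : ℝ), 0 ≤ a → 0 ≤ b → a + b = 1 →
      ∃ t, ∀ k, B k t ≤ a * B k t₁ + b * B k t₂)
    {w : ℝ} (hw : ∀ t, ∃ k, w ≤ B k t) :
    ∃ q ∈ stdSimplex ℝ ι, ∀ t, w ≤ ∑ k, q k * B k t := by
  have hE : Convex ℝ {y : ι → ℝ | ∃ t, ∀ k, B k t ≤ y k} := by
    rintro y₁ ⟨t₁, h₁⟩ y₂ ⟨t₂, h₂⟩ a b ha hb hab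
    obtain ⟨t, ht⟩ := hB t₁ t₂ a b ha hb hab
    refine ⟨t, fun k => (ht k).trans ?_⟩
    simp only [Pi.add_apply, Pi.smul_apply, smul_eq_mul]
    gcongr
    exacts [h₁ k, h₂ k]
  obtain ⟨q, hq, hle⟩ := exists_mem_stdSimplex_forall_le_sum_mul hE fun y ⟨t, ht⟩ =>
    (hw t).imp fun k hk => hk.trans (ht k)
  exact ⟨q, hq, fun t => hle _ ⟨t, fun k => le_rfl⟩⟩

noncomputable section IntermediateGame

variable {K L V W : Type*} [Fintype L] {S : Set V} {T : Set W}
  {G : K → L → V → W → ℝ} {Q : K → L → ℝ}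

/-- The payoff `G_Q^k(s, t̂)` of the intermediate game. -/
def intermediatePayoff (Q : K → L → ℝ) (G : K → L → V → W → ℝ) (k : K) (s : V) (t : L → T) :
    ℝ :=
  ∑ l, Q k l * G k l s (t l)

def bestReplyValue (S : Set V) (Q : K → L → ℝ) (G : K → L → V → W → ℝ) (k : K) (t : L → T) :
    ℝ :=
  ⨆ s : S, intermediatePayoff Q G k s t

variable {C : ℝ} {k : K}

theorem abs_intermediatePayoff_le (hQ : Q k ∈ stdSimplex ℝ L)
    (hC : ∀ l, ∀ s ∈ S, ∀ t ∈ T, |G k l s t| ≤ C) {s : V} (hs : s ∈ S) (t : L → T) :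
    |intermediatePayoff Q G k s t| ≤ C :=
  calc |∑ l, Q k l * G k l s (t l)| ≤ ∑ l, |Q k l * G k l s (t l)| := abs_sum_le_sum_abs _ _
    _ ≤ ∑ l, Q k l * C := sum_le_sum fun l _ => by
        rw [abs_mul, abs_of_nonneg (hQ.1 l)]
        exact mul_le_mul_of_nonneg_left (hC l s hs _ (t l).2) (hQ.1 l)
    _ = C := by rw [← sum_mul, hQ.2, one_mul]

theorem bddAbove_range_intermediatePayoff (hQ : Q k ∈ stdSimplex ℝ L)
    (hC : ∀ l, ∀ s ∈ S, ∀ t ∈ T, |G k l s t| ≤ C) (t : L → T) :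
    BddAbove (range fun s : S => intermediatePayoff Q G k s t) :=
  ⟨C, forall_mem_range.2 fun s =>
    (le_abs_self _).trans (abs_intermediatePayoff_le hQ hC s.2 t)⟩

theorem abs_bestReplyValue_le (hS : S.Nonempty) (hQ : Q k ∈ stdSimplex ℝ L)
    (hC : ∀ l, ∀ s ∈ S, ∀ t ∈ T, |G k l s t| ≤ C) (t : L → T) :
    |bestReplyValue S Q G k t| ≤ C := by
  have := hS.to_subtype
  obtain ⟨s₀, hs₀⟩ := hS
  refine abs_le.2 ⟨?_, ciSup_le fun s =>
    (le_abs_self _).trans (abs_intermediatePayoff_le hQ hC s.2 t)⟩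
  exact (neg_le_of_abs_le (abs_intermediatePayoff_le hQ hC hs₀ t)).trans
    (le_ciSup (bddAbove_range_intermediatePayoff hQ hC t) ⟨s₀, hs₀⟩)

theorem exists_bestReplyValue_le_convexComb [AddCommGroup W] [Module ℝ W] (hS : S.Nonempty)
    (hTconv : Convex ℝ T)
    (hGaff : ∀ k l, ∀ s ∈ S, ∀ t₁ ∈ T, ∀ t₂ ∈ T, ∀ a b : ℝ, 0 ≤ a → 0 ≤ b → a + b = 1 →
      G k l s (a • t₁ + b • t₂) = a * G k l s t₁ + b * G k l s t₂)
    (hQ : ∀ k, Q k ∈ stdSimplex ℝ L) (hC : ∀ k l, ∀ s ∈ S, ∀ t ∈ T, |G k l s t| ≤ C)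
    (t₁ t₂ : L → T) {a b : ℝ} (ha : 0 ≤ a) (hb : 0 ≤ b) (hab : a + b = 1) :
    ∃ t : L → T, ∀ k, bestReplyValue S Q G k t ≤
      a * bestReplyValue S Q G k t₁ + b * bestReplyValue S Q G k t₂ := by
  have := hS.to_subtype
  refine ⟨fun l => ⟨a • (t₁ l : W) + b • (t₂ l : W), hTconv (t₁ l).2 (t₂ l).2 ha hb hab⟩,
    fun k => ciSup_le fun s => ?_⟩
  have hsplit : intermediatePayoff Q G k s
      (fun l => ⟨a • (t₁ l : W) + b • (t₂ l : W), hTconv (t₁ l).2 (t₂ l).2 ha hb hab⟩) =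
      a * intermediatePayoff Q G k s t₁ + b * intermediatePayoff Q G k s t₂ := by
    simp only [intermediatePayoff, hGaff k _ s s.2 _ (t₁ _).2 _ (t₂ _).2 a b ha hb hab, mul_sum,
      ← sum_add_distrib]
    exact sum_congr rfl fun l _ => by ring
  rw [hsplit]
  gcongr <;> exact le_ciSup (bddAbove_range_intermediatePayoff (hQ k) (hC k) _) s

variable [Fintype K]

/-- The minmax `v_Q⁺(p)` of the intermediate game. -/
def intermediateMinmax (S : Set V) (T : Set W) (Q : K → L → ℝ) (G : K → L → V → W → ℝ)
    (p : K → ℝ) : ℝ :=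
  ⨅ t : L → T, ⨆ s : K → S, ∑ k, p k * intermediatePayoff Q G k (s k) t

/-- The supremum `sup_{(q,s)} h_Q[x](q, s, t̂)` of the dual game `𝒟[𝒢_Q](x)`. -/
def dualMaxPayoff (S : Set V) (Q : K → L → ℝ) (G : K → L → V → W → ℝ) (x : K → ℝ)
    (t : L → T) : ℝ :=
  ⨆ q : stdSimplex ℝ K, ⨆ s : S,
    ((∑ k, (q : K → ℝ) k * intermediatePayoff Q G k s t) - ∑ k, (q : K → ℝ) k * x k)

/-- The minmax `w_Q⁺(x)` of the dual game. -/
def dualMinmax (S : Set V) (T : Set W) (Q : K → L → ℝ) (G : K → L → V → W → ℝ) (x : K → ℝ) :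
    ℝ :=
  ⨅ t : L → T, dualMaxPayoff S Q G x t

theorem ciSup_sum_mul_intermediatePayoff (hQ : ∀ k, Q k ∈ stdSimplex ℝ L)
    (hC : ∀ k l, ∀ s ∈ S, ∀ t ∈ T, |G k l s t| ≤ C) [Nonempty S] {c : K → ℝ} (hc : ∀ k, 0 ≤ c k)
    (t : L → T) :
    ⨆ s : K → S, ∑ k, c k * intermediatePayoff Q G k (s k) t =
      ∑ k, c k * bestReplyValue S Q G k t :=
  ciSup_pi_sum_mul hc fun k => bddAbove_range_intermediatePayoff (hQ k) (hC k) t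

theorem intermediateMinmax_eq (hQ : ∀ k, Q k ∈ stdSimplex ℝ L)
    (hC : ∀ k l, ∀ s ∈ S, ∀ t ∈ T, |G k l s t| ≤ C) [Nonempty S] {p : K → ℝ}
    (hp : ∀ k, 0 ≤ p k) :
    intermediateMinmax S T Q G p = ⨅ t : L → T, ∑ k, p k * bestReplyValue S Q G k t := by
  simp only [intermediateMinmax, ciSup_sum_mul_intermediatePayoff hQ hC hp]

theorem dualMaxPayoff_eq_sup' [Nonempty K] (hQ : ∀ k, Q k ∈ stdSimplex ℝ L)
    (hC : ∀ k l, ∀ s ∈ S, ∀ t ∈ T, |G k l s t| ≤ C) [Nonempty S] (x : K → ℝ) (t : L → T) :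
    dualMaxPayoff S Q G x t = univ.sup' univ_nonempty fun k => bestReplyValue S Q G k t - x k := by
  have hbdd (k : K) := bddAbove_range_intermediatePayoff (hQ k) (hC k) t
  simp only [dualMaxPayoff, bestReplyValue, ← sum_sub_distrib, ← mul_sub, ciSup_sub (hbdd _)]
  refine ciSup_stdSimplex_ciSup_sum_mul fun k => ?_
  obtain ⟨M, hM⟩ := hbdd k
  exact ⟨M - x k, forall_mem_range.2 fun s => sub_le_sub_right (hM (mem_range_self s)) _⟩

theorem sum_mul_bestReplyValue_le [Nonempty K] (hQ : ∀ k, Q k ∈ stdSimplex ℝ L)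
    (hC : ∀ k l, ∀ s ∈ S, ∀ t ∈ T, |G k l s t| ≤ C) [Nonempty S] {p : K → ℝ}
    (hp : p ∈ stdSimplex ℝ K) (x : K → ℝ) (t : L → T) :
    ∑ k, p k * bestReplyValue S Q G k t ≤ dualMaxPayoff S Q G x t + ∑ k, x k * p k := by
  rw [dualMaxPayoff_eq_sup' hQ hC, ← sub_le_iff_le_add, ← sum_sub_distrib]
  calc ∑ k, (p k * bestReplyValue S Q G k t - x k * p k)
      = ∑ k, p k * (bestReplyValue S Q G k t - x k) := sum_congr rfl fun k _ => by ring
    _ ≤ ∑ k, p k * univ.sup' univ_nonempty fun k => bestReplyValue S Q G k t - x k :=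
        sum_le_sum fun k _ => mul_le_mul_of_nonneg_left
          (le_sup' (fun k => bestReplyValue S Q G k t - x k) (mem_univ k)) (hp.1 k)
    _ = _ := by rw [← sum_mul, hp.2, one_mul]

theorem dualMinmax_add_le_intermediateMinmax [Nonempty K] [AddCommGroup W] [Module ℝ W]
    (hS : S.Nonempty) (hT : T.Nonempty) (hTconv : Convex ℝ T)
    (hGaff : ∀ k l, ∀ s ∈ S, ∀ t₁ ∈ T, ∀ t₂ ∈ T, ∀ a b : ℝ, 0 ≤ a → 0 ≤ b → a + b = 1 →
      G k l s (a • t₁ + b • t₂) = a * G k l s t₁ + b * G k l s t₂)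
    (hQ : ∀ k, Q k ∈ stdSimplex ℝ L) (hC : ∀ k l, ∀ s ∈ S, ∀ t ∈ T, |G k l s t| ≤ C)
    {p x : K → ℝ} (hx : ∀ p' ∈ stdSimplex ℝ K, intermediateMinmax S T Q G p' ≤
      intermediateMinmax S T Q G p + ∑ k, x k * (p' k - p k)) :
    dualMinmax S T Q G x + ∑ k, x k * p k ≤ intermediateMinmax S T Q G p := by
  have := hS.to_subtype
  have : Nonempty (L → T) := have := hT.to_subtype; inferInstance
  set A : K → (L → T) → ℝ := bestReplyValue S Q G
  have hbdd : BddBelow (range (dualMaxPayoff S Q G x : (L → T) → ℝ)) := by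
    refine ⟨-C - x (Classical.arbitrary K), forall_mem_range.2 fun t => ?_⟩
    rw [dualMaxPayoff_eq_sup' hQ hC]
    refine le_trans ?_ (le_sup' (fun k => A k t - x k) (mem_univ (Classical.arbitrary K)))
    linarith [neg_le_of_abs_le (abs_bestReplyValue_le hS (hQ (Classical.arbitrary K))
      (hC (Classical.arbitrary K)) t)]
  have hw (t : L → T) : ∃ k, dualMinmax S T Q G x ≤ A k t - x k := by
    obtain ⟨k, -, hk⟩ := univ.exists_mem_eq_sup' univ_nonempty fun k => A k t - x k
    exact ⟨k, hk ▸ dualMaxPayoff_eq_sup' hQ hC x t ▸ ciInf_le hbdd t⟩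
  obtain ⟨q, hq, hwq⟩ := exists_mem_stdSimplex_forall_le_sum_mul_of_convexLike
    (B := fun k t => A k t - x k) (fun t₁ t₂ a b ha hb hab => by
      obtain ⟨t, ht⟩ := exists_bestReplyValue_le_convexComb hS hTconv hGaff hQ hC t₁ t₂ ha hb hab
      exact ⟨t, fun k => by linear_combination ht k + x k * hab⟩) hw
  have hq_value : dualMinmax S T Q G x + ∑ k, x k * q k ≤ intermediateMinmax S T Q G q := by
    rw [intermediateMinmax_eq hQ hC hq.1]
    refine le_ciInf fun t => ?_
    have := hwq t
    simp only [mul_sub, sum_sub_distrib] at this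
    linarith [Fintype.sum_congr _ _ fun k => mul_comm (x k) (q k)]
  have := hx q hq
  simp only [mul_sub, sum_sub_distrib] at this
  linarith

end IntermediateGame

theorem stmt_6_general
    {K L : Type*} [Fintype K] [Nonempty K] [Fintype L]
    {V W : Type*} [AddCommGroup V] [Module ℝ V] [AddCommGroup W] [Module ℝ W]
    (S : Set V) (T : Set W) (hS : S.Nonempty) (hT : T.Nonempty)
    (hTconv : Convex ℝ T)
    (G : K → L → V → W → ℝ)
    (hGaff₂ : ∀ k l, ∀ s ∈ S, ∀ t₁ ∈ T, ∀ t₂ ∈ T, ∀ a b : ℝ,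
      0 ≤ a → 0 ≤ b → a + b = 1 →
      G k l s (a • t₁ + b • t₂) = a * G k l s t₁ + b * G k l s t₂)
    (C : ℝ) (hC : ∀ k l, ∀ s ∈ S, ∀ t ∈ T, |G k l s t| ≤ C)
    (π : K × L → ℝ)
    (p : K → ℝ) (hp : p ∈ stdSimplex ℝ K)
    (Q : K → L → ℝ) (hQ : ∀ k, Q k ∈ stdSimplex ℝ L)
    (hπpQ : ∀ k l, π (k, l) = p k * Q k l)
    (vQp wQp : (K → ℝ) → ℝ)
    (hvp : ∀ p' : K → ℝ, vQp p' =
      ⨅ t : L → T, ⨆ s : K → S,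
        ∑ k, p' k * ∑ l, Q k l * G k l (s k : V) (t l : W))
    (hwp : ∀ x : K → ℝ, wQp x =
      ⨅ t : L → T, ⨆ q : stdSimplex ℝ K, ⨆ s : S,
        ((∑ k, (q : K → ℝ) k * ∑ l, Q k l * G k l (s : V) (t l : W)) -
          ∑ k, (q : K → ℝ) k * x k))
    (vplus : ℝ)
    (hvplus : vplus =
      ⨅ t : L → T, ⨆ s : K → S, ∑ k, ∑ l, π (k, l) * G k l (s k : V) (t l : W))
    (x : K → ℝ)
    (hx : ∀ p' ∈ stdSimplex ℝ K,
      vQp p' ≤ vQp p + ∑ k, x k * (p' k - p k))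
    (ε : ℝ)
    (tε : L → T)
    (htε : (⨆ q : stdSimplex ℝ K, ⨆ s : S,
        ((∑ k, (q : K → ℝ) k * ∑ l, Q k l * G k l (s : V) (tε l : W)) -
          ∑ k, (q : K → ℝ) k * x k)) ≤ wQp x + ε) :
    (⨆ s : K → S, ∑ k, ∑ l, π (k, l) * G k l (s k : V) (tε l : W)) ≤
      vplus + ε := by
  have : Nonempty S := hS.to_subtype
  obtain rfl : vQp = intermediateMinmax S T Q G := funext hvp
  obtain rfl : wQp = dualMinmax S T Q G := funext hwp
  have hpQ (s : K → S) (t : L → T) :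
      ∑ k, ∑ l, π (k, l) * G k l (s k) (t l) = ∑ k, p k * intermediatePayoff Q G k (s k) t := by
    simp only [intermediatePayoff, hπpQ, mul_sum, mul_assoc]
  have htε' : dualMaxPayoff S Q G x tε ≤ dualMinmax S T Q G x + ε := htε
  simp only [hvplus, hpQ]
  rw [ciSup_sum_mul_intermediatePayoff hQ hC hp.1]
  calc ∑ k, p k * bestReplyValue S Q G k tε
      ≤ dualMaxPayoff S Q G x tε + ∑ k, x k * p k := sum_mul_bestReplyValue_le hQ hC hp x tε
    _ ≤ dualMinmax S T Q G x + ∑ k, x k * p k + ε := by linarith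
    _ ≤ intermediateMinmax S T Q G p + ε := by
        gcongr
        exact dualMinmax_add_le_intermediateMinmax hS hT hTconv hGaff₂ hQ hC hx

/-- let `π = p ⊗ Q`, let `x` be a supergradient at `p` of the
minmax `v_Q⁺` of the intermediate game (extended by `−∞` outside `Δ(K)`, so the
supergradient property need only be tested on `Δ(K)`), and let `tε ∈ T^L` be
`ε`-optimal for player 2 in the dual game `𝒟[𝒢_Q](x)`. Then `tε` is
`ε`-optimal for player 2 in the primal game `𝒢(π)`. -/
theorem stmt_6
    {K L : Type*} [Fintype K] [Nonempty K] [Fintype L] [Nonempty L]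
    {V W : Type*} [AddCommGroup V] [Module ℝ V] [AddCommGroup W] [Module ℝ W]
    (S : Set V) (T : Set W) (hS : S.Nonempty) (hT : T.Nonempty)
    (hSconv : Convex ℝ S) (hTconv : Convex ℝ T)
    (G : K → L → V → W → ℝ)
    (hGaff₁ : ∀ k l, ∀ t ∈ T, ∀ s₁ ∈ S, ∀ s₂ ∈ S, ∀ a b : ℝ,
      0 ≤ a → 0 ≤ b → a + b = 1 →
      G k l (a • s₁ + b • s₂) t = a * G k l s₁ t + b * G k l s₂ t)
    (hGaff₂ : ∀ k l, ∀ s ∈ S, ∀ t₁ ∈ T, ∀ t₂ ∈ T, ∀ a b : ℝ,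
      0 ≤ a → 0 ≤ b → a + b = 1 →
      G k l s (a • t₁ + b • t₂) = a * G k l s t₁ + b * G k l s t₂)
    (C : ℝ) (hC : ∀ k l, ∀ s ∈ S, ∀ t ∈ T, |G k l s t| ≤ C)
    (π : K × L → ℝ) (hπ : π ∈ stdSimplex ℝ (K × L))
    (p : K → ℝ) (hp : p ∈ stdSimplex ℝ K)
    (Q : K → L → ℝ) (hQ : ∀ k, Q k ∈ stdSimplex ℝ L)
    (hπpQ : ∀ k l, π (k, l) = p k * Q k l)
    (vQp wQp : (K → ℝ) → ℝ)
    (hvp : ∀ p' : K → ℝ, vQp p' =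
      ⨅ t : L → T, ⨆ s : K → S,
        ∑ k, p' k * ∑ l, Q k l * G k l (s k : V) (t l : W))
    (hwp : ∀ x : K → ℝ, wQp x =
      ⨅ t : L → T, ⨆ q : stdSimplex ℝ K, ⨆ s : S,
        ((∑ k, (q : K → ℝ) k * ∑ l, Q k l * G k l (s : V) (t l : W)) -
          ∑ k, (q : K → ℝ) k * x k))
    (vplus : ℝ)
    (hvplus : vplus =
      ⨅ t : L → T, ⨆ s : K → S, ∑ k, ∑ l, π (k, l) * G k l (s k : V) (t l : W))
    (x : K → ℝ)
    (hx : ∀ p' ∈ stdSimplex ℝ K,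
      vQp p' ≤ vQp p + ∑ k, x k * (p' k - p k))
    (ε : ℝ) (hε : 0 ≤ ε)
    (tε : L → T)
    (htε : (⨆ q : stdSimplex ℝ K, ⨆ s : S,
        ((∑ k, (q : K → ℝ) k * ∑ l, Q k l * G k l (s : V) (tε l : W)) -
          ∑ k, (q : K → ℝ) k * x k)) ≤ wQp x + ε) :
    (⨆ s : K → S, ∑ k, ∑ l, π (k, l) * G k l (s k : V) (tε l : W)) ≤
      vplus + ε :=
  stmt_6_general S T hS hT hTconv G hGaff₂ C hC π p hp Q hQ hπpQ vQp wQp hvp hwp vplus hvplus x hx ε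
    tε htε
end

section
/- Assume θ_1 < 1. Let p∈Δ(K), Q∈Δ(L)^K, x∈ℝ^K, set π := p⊗Q, and let ŝ, t̂ be strategies with first-stage strategies σ, τ. Then h_θ[x,Q](p,ŝ,t̂) = (1−θ_1)·Σ_{i: P^π_{στ}(i)>0} P^π_{στ}(i)·( Σ_{j: P^π_{στ}(j|i)>0} P^π_{στ}(j|i)·γ_{θ^+}(π_{ij}, ŝ^+_{ij}, t̂^+_{ij}) − ⟨p_i, (x − θ_1·G^Q_{iτ})/(1−θ_1)⟩ ), where p_i := (P^π_{στ}(k|i))_{k∈K} ∈ Δ(K) and G^Q_{iτ} := (Σ_{ℓ,j} Q(ℓ|k)τ^ℓ(j)G^{kℓ}(i,j))_{k∈K} ∈ ℝ^K. -/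
open scoped BigOperators

noncomputable section RepeatedGames

/-- Probability of a finite history (list of action pairs, in chronological
order) under behavioral strategies `s`, `t` (which map the list of past action
pairs to a mixed action). -/
def probH {I J : Type*} (s : List (I × J) → I → ℝ) (t : List (I × J) → J → ℝ) :
    List (I × J) → ℝ
  | [] => 1
  | a :: h =>
      s [] a.1 * t [] a.2 *
        probH (fun h' => s (a :: h')) (fun h' => t (a :: h')) h

/-- Expected stage payoff at stage `m+1` (i.e. after `m` completed stages). -/
def stagePay {I J : Type*} [Fintype I] [Fintype J]
    (s : List (I × J) → I → ℝ) (t : List (I × J) → J → ℝ)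
    (g : I → J → ℝ) (m : ℕ) : ℝ :=
  ∑ h : Fin m → I × J,
    probH s t (List.ofFn h) *
      ∑ i, ∑ j, s (List.ofFn h) i * t (List.ofFn h) j * g i j

/-- Behavioral strategies of a player with type set `X` and action set `A`,
observing histories in `(I × J)^*`. -/
def Strat (I J X A : Type*) [Fintype A] : Type _ :=
  {f : X → List (I × J) → A → ℝ // ∀ x h, f x h ∈ stdSimplex ℝ A}

instance {I J X A : Type*} [Fintype A] [Nonempty A] :
    Nonempty (Strat I J X A) := by
  refine ⟨⟨fun _ _ _ => (Fintype.card A : ℝ)⁻¹, fun x h => ⟨fun a => by positivity, ?_⟩⟩⟩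
  have hA : (Fintype.card A : ℝ) ≠ 0 := by
    exact_mod_cast Fintype.card_ne_zero
  simp [Finset.sum_const, Finset.card_univ, nsmul_eq_mul, mul_inv_cancel₀ hA]

/-- The auxiliary `θ`-weighted payoff `γ_θ(π, ŝ, t̂; ζ)`. -/
def payA {I J K L : Type*} [Fintype I] [Fintype J] [Fintype K] [Fintype L]
    (θ : ℕ → ℝ) (G : K → L → I → J → ℝ) (π : K × L → ℝ) (ζ : K → ℝ)
    (s : Strat I J K I) (t : Strat I J L J) : ℝ :=
  ∑ k, ∑ l, π (k, l) * ζ k *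
    ∑' m : ℕ, θ m * stagePay (s.1 k) (t.1 l) (G k l) m

/-- The `θ`-weighted payoff `γ_θ(π, ŝ, t̂)`. -/
def pay {I J K L : Type*} [Fintype I] [Fintype J] [Fintype K] [Fintype L]
    (θ : ℕ → ℝ) (G : K → L → I → J → ℝ) (π : K × L → ℝ)
    (s : Strat I J K I) (t : Strat I J L J) : ℝ :=
  payA θ G π (fun _ => 1) s t

/-- Maxmin `v⁻_θ(π)` of the repeated game `𝒢_θ(π)`. -/
def vMinus {I J K L : Type*} [Fintype I] [Fintype J] [Fintype K] [Fintype L]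
    (θ : ℕ → ℝ) (G : K → L → I → J → ℝ) (π : K × L → ℝ) : ℝ :=
  ⨆ s : Strat I J K I, ⨅ t : Strat I J L J, pay θ G π s t

/-- Minmax `v⁺_θ(π)` of the repeated game `𝒢_θ(π)`. -/
def vPlus {I J K L : Type*} [Fintype I] [Fintype J] [Fintype K] [Fintype L]
    (θ : ℕ → ℝ) (G : K → L → I → J → ℝ) (π : K × L → ℝ) : ℝ :=
  ⨅ t : Strat I J L J, ⨆ s : Strat I J K I, pay θ G π s t

/-- Dual payoff `h_θ[x,Q;ζ](p,ŝ,t̂) = γ_θ(p⊗Q, ŝ, t̂; ζ) − ⟨p,x⟩`. -/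
def hDual {I J K L : Type*} [Fintype I] [Fintype J] [Fintype K] [Fintype L]
    (θ : ℕ → ℝ) (G : K → L → I → J → ℝ) (x : K → ℝ) (Q : K → L → ℝ)
    (ζ : K → ℝ) (p : K → ℝ) (s : Strat I J K I) (t : Strat I J L J) : ℝ :=
  payA θ G (fun kl => p kl.1 * Q kl.1 kl.2) ζ s t - ∑ k, p k * x k

/-- Maxmin `w⁻_θ(x,Q;ζ)` of the dual game `𝒟[𝒢_θ](x,Q;ζ)`. -/
def wMinus {I J K L : Type*} [Fintype I] [Fintype J] [Fintype K] [Fintype L]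
    (θ : ℕ → ℝ) (G : K → L → I → J → ℝ) (x : K → ℝ) (Q : K → L → ℝ)
    (ζ : K → ℝ) : ℝ :=
  ⨆ ps : stdSimplex ℝ K × Strat I J K I, ⨅ t : Strat I J L J,
    hDual θ G x Q ζ (ps.1 : K → ℝ) ps.2 t

/-- Minmax `w⁺_θ(x,Q;ζ)` of the dual game `𝒟[𝒢_θ](x,Q;ζ)`. -/
def wPlus {I J K L : Type*} [Fintype I] [Fintype J] [Fintype K] [Fintype L]
    (θ : ℕ → ℝ) (G : K → L → I → J → ℝ) (x : K → ℝ) (Q : K → L → ℝ)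
    (ζ : K → ℝ) : ℝ :=
  ⨅ t : Strat I J L J, ⨆ ps : stdSimplex ℝ K × Strat I J K I,
    hDual θ G x Q ζ (ps.1 : K → ℝ) ps.2 t

end RepeatedGames

/-!
Splitting off the first stage, the `θ`-payoff of a type pair `(k, ℓ)` is `θ₁` times its
first-stage payoff plus `1 - θ₁` times the `σᵏ ⊗ τˡ`-average of the `θ⁺`-payoffs of the
continuation strategies; this holds stage by stage because a history of length `m + 1` is a
first action pair followed by a history of length `m`. Averaging over `π` and grouping the
continuation terms by the observed pair `(i, j)` turns them into `P(i,j) γ_{θ⁺}(π_{ij}, ŝ⁺, t̂⁺)`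
(Bayes' rule). Finally, conditioning on `i` alone, `⟨p, x⟩ = Σᵢ P(i) ⟨pᵢ, x⟩` and the expected
first-stage payoff is `Σᵢ P(i) ⟨pᵢ, G^Q_{iτ}⟩`.
-/

open Finset

section Histories

variable {I J : Type*}

theorem sum_fin_succ_pi {γ M : Type*} [Fintype γ] [AddCommMonoid M] {m : ℕ}
    (F : (Fin (m + 1) → γ) → M) :
    ∑ h, F h = ∑ a, ∑ h : Fin m → γ, F (Fin.cons a h) := by
  rw [← (Fin.consEquiv fun _ => γ).sum_comp, Fintype.sum_prod_type]
  rfl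

theorem probH_nonneg {s : List (I × J) → I → ℝ} {t : List (I × J) → J → ℝ}
    (hs : ∀ h i, 0 ≤ s h i) (ht : ∀ h j, 0 ≤ t h j) (l : List (I × J)) :
    0 ≤ probH s t l := by
  induction l generalizing s t with
  | nil => exact zero_le_one
  | cons a l ih =>
    exact mul_nonneg (mul_nonneg (hs _ _) (ht _ _)) (ih (fun _ => hs _) (fun _ => ht _))

variable [Fintype I] [Fintype J]

theorem sum_probH_ofFn {s : List (I × J) → I → ℝ} {t : List (I × J) → J → ℝ}
    (hs : ∀ h, ∑ i, s h i = 1) (ht : ∀ h, ∑ j, t h j = 1) (m : ℕ) :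
    ∑ h : Fin m → I × J, probH s t (List.ofFn h) = 1 := by
  induction m generalizing s t with
  | zero => simp [probH]
  | succ m ih =>
    simp only [sum_fin_succ_pi, List.ofFn_cons, probH, ← mul_sum,
      ih (fun _ => hs _) (fun _ => ht _), mul_one, Fintype.sum_prod_type, hs, ht]

theorem stagePay_zero (s : List (I × J) → I → ℝ) (t : List (I × J) → J → ℝ)
    (g : I → J → ℝ) :
    stagePay s t g 0 = ∑ i, ∑ j, s [] i * t [] j * g i j := by
  simp [stagePay, probH]

theorem stagePay_succ (s : List (I × J) → I → ℝ) (t : List (I × J) → J → ℝ)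
    (g : I → J → ℝ) (m : ℕ) :
    stagePay s t g (m + 1) =
      ∑ i, ∑ j, s [] i * t [] j *
        stagePay (fun h => s ((i, j) :: h)) (fun h => t ((i, j) :: h)) g m := by
  simp only [stagePay, sum_fin_succ_pi, List.ofFn_cons, probH, Fintype.sum_prod_type, mul_sum,
    mul_assoc]

theorem abs_sum_sum_mul_le {a : I → ℝ} {b : J → ℝ} (ha : a ∈ stdSimplex ℝ I)
    (hb : b ∈ stdSimplex ℝ J) (g : I → J → ℝ) :
    |∑ i, ∑ j, a i * b j * g i j| ≤ ∑ i, ∑ j, |g i j| := by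
  refine (abs_sum_le_sum_abs _ _).trans <| sum_le_sum fun i _ =>
    (abs_sum_le_sum_abs _ _).trans <| sum_le_sum fun j _ => ?_
  obtain ⟨ha0, ha1⟩ := mem_Icc_of_mem_stdSimplex ha i
  obtain ⟨hb0, hb1⟩ := mem_Icc_of_mem_stdSimplex hb j
  rw [abs_mul, abs_mul, abs_of_nonneg ha0, abs_of_nonneg hb0]
  exact mul_le_of_le_one_left (abs_nonneg _) (mul_le_one₀ ha1 hb0 hb1)

theorem abs_stagePay_le {s : List (I × J) → I → ℝ} {t : List (I × J) → J → ℝ}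
    (hs : ∀ h, s h ∈ stdSimplex ℝ I) (ht : ∀ h, t h ∈ stdSimplex ℝ J) (g : I → J → ℝ) (m : ℕ) :
    |stagePay s t g m| ≤ ∑ i, ∑ j, |g i j| := by
  have hP := probH_nonneg (fun h => (hs h).1) (fun h => (ht h).1)
  calc |stagePay s t g m|
      ≤ ∑ h : Fin m → I × J, probH s t (List.ofFn h) * ∑ i, ∑ j, |g i j| := by
        refine (abs_sum_le_sum_abs _ _).trans <| sum_le_sum fun h _ => ?_
        rw [abs_mul, abs_of_nonneg (hP _)]
        exact mul_le_mul_of_nonneg_left (abs_sum_sum_mul_le (hs _) (ht _) g) (hP _)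
    _ = ∑ i, ∑ j, |g i j| := by
        rw [← sum_mul, sum_probH_ofFn (fun h => (hs h).2) (fun h => (ht h).2), one_mul]

theorem summable_mul_stagePay {θ : ℕ → ℝ} (hθ : Summable θ) {s : List (I × J) → I → ℝ}
    {t : List (I × J) → J → ℝ} (hs : ∀ h, s h ∈ stdSimplex ℝ I)
    (ht : ∀ h, t h ∈ stdSimplex ℝ J) (g : I → J → ℝ) :
    Summable fun m => θ m * stagePay s t g m :=
  .of_norm_bounded (hθ.abs.mul_right _) fun m => by
    rw [Real.norm_eq_abs, abs_mul]
    exact mul_le_mul_of_nonneg_left (abs_stagePay_le hs ht g m) (abs_nonneg _)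

theorem tsum_mul_stagePay {θ : ℕ → ℝ} (hθ : Summable θ) {s : List (I × J) → I → ℝ}
    {t : List (I × J) → J → ℝ} (hs : ∀ h, s h ∈ stdSimplex ℝ I)
    (ht : ∀ h, t h ∈ stdSimplex ℝ J) (g : I → J → ℝ) :
    ∑' m, θ m * stagePay s t g m =
      θ 0 * ∑ i, ∑ j, s [] i * t [] j * g i j +
        ∑ i, ∑ j, s [] i * t [] j *
          ∑' m, θ (m + 1) *
            stagePay (fun h => s ((i, j) :: h)) (fun h => t ((i, j) :: h)) g m := by
  have hθ' : Summable fun m => θ (m + 1) := (summable_nat_add_iff 1).2 hθ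
  have hcont : ∀ i j, Summable fun m => θ (m + 1) *
      stagePay (fun h => s ((i, j) :: h)) (fun h => t ((i, j) :: h)) g m :=
    fun i j => summable_mul_stagePay hθ' (fun _ => hs _) (fun _ => ht _) g
  rw [(summable_mul_stagePay hθ hs ht g).tsum_eq_zero_add, stagePay_zero]
  have hstep : ∀ m, θ (m + 1) * stagePay s t g (m + 1) =
      ∑ i, ∑ j, s [] i * t [] j * (θ (m + 1) *
        stagePay (fun h => s ((i, j) :: h)) (fun h => t ((i, j) :: h)) g m) := fun m => by
    rw [stagePay_succ, mul_sum]
    exact sum_congr rfl fun i _ => by rw [mul_sum]; exact sum_congr rfl fun j _ => by ring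
  rw [tsum_congr hstep, (hasSum_sum fun i _ => hasSum_sum fun j _ =>
    (hcont i j).hasSum.mul_left (s [] i * t [] j)).tsum_eq]

end Histories

theorem sum_sum_sum_sum_comm {α β γ δ M : Type*} [Fintype α] [Fintype β] [Fintype γ]
    [Fintype δ] [AddCommMonoid M] (f : α → β → γ → δ → M) :
    ∑ a, ∑ b, ∑ c, ∑ d, f a b c d = ∑ c, ∑ d, ∑ a, ∑ b, f a b c d := by
  calc ∑ a, ∑ b, ∑ c, ∑ d, f a b c d = ∑ a, ∑ c, ∑ d, ∑ b, f a b c d :=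
        sum_congr rfl fun a _ => by rw [sum_comm]; exact sum_congr rfl fun c _ => sum_comm
    _ = ∑ c, ∑ d, ∑ a, ∑ b, f a b c d := by
        rw [sum_comm]; exact sum_congr rfl fun c _ => sum_comm

theorem ite_pos_mul_sum_div {α : Type*} [Fintype α] {w : α → ℝ} (hw : ∀ a, 0 ≤ w a)
    (f : α → ℝ) :
    (if 0 < ∑ a, w a then (∑ a, w a) * ∑ a, w a / (∑ b, w b) * f a else 0) =
      ∑ a, w a * f a := by
  split_ifs with h
  · rw [mul_sum]
    exact sum_congr rfl fun a _ => by field_simp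
  · have hw0 := (sum_eq_zero_iff_of_nonneg fun a _ => hw a).1
      (le_antisymm (not_lt.1 h) (sum_nonneg fun a _ => hw a))
    simp [hw0]

theorem ite_pos_mul_sum_div_sub_sum_div {α β : Type*} [Fintype α] [Fintype β] {P : ℝ}
    {a : α → ℝ} {v : β → ℝ} (ha : ∀ x, 0 ≤ a x) (hv : ∀ y, 0 ≤ v y) (haP : ∑ x, a x = P)
    (hvP : ∑ y, v y = P) (X : α → ℝ) (c : β → ℝ) :
    (if 0 < P then P * (∑ x, (if 0 < a x / P then a x / P * X x else 0) - ∑ y, v y / P * c y)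
      else 0) = ∑ x, (if 0 < a x then a x * X x else 0) - ∑ y, v y * c y := by
  split_ifs with hP
  · rw [mul_sub, mul_sum, mul_sum]
    congr 1 <;> refine sum_congr rfl fun x _ => ?_
    · simp only [div_pos_iff_of_pos_right hP]
      split_ifs
      · field_simp
      · simp
    · field_simp
  · have hP0 : P = 0 := le_antisymm (not_lt.1 hP) (haP ▸ sum_nonneg fun x _ => ha x)
    have ha0 := (sum_eq_zero_iff_of_nonneg fun x _ => ha x).1 (haP.trans hP0)
    have hv0 := (sum_eq_zero_iff_of_nonneg fun y _ => hv y).1 (hvP.trans hP0)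
    simp [ha0, hv0]

theorem sum_sum_mul_strat_mul_strat {K L I J : Type*} [Fintype L] [Fintype I] [Fintype J]
    {p : K → ℝ} {Q : K → L → ℝ} (hQ : ∀ k, Q k ∈ stdSimplex ℝ L) (s : Strat I J K I)
    (t : Strat I J L J) (i : I) (k : K) :
    ∑ l, ∑ j, p k * Q k l * s.1 k [] i * t.1 l [] j = p k * s.1 k [] i := by
  simp only [← mul_sum, (t.2 _ _).2, mul_one, mul_right_comm _ _ (s.1 k [] i), (hQ k).2]

noncomputable section FirstStage

variable {K L I J : Type*} [Fintype K] [Fintype L] [Fintype I] [Fintype J]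

def Strat.cont {X A : Type*} [Fintype A] (s : Strat I J X A) (a : I × J) : Strat I J X A :=
  ⟨fun x h => s.1 x (a :: h), fun x h => s.2 x (a :: h)⟩

def firstStageProb (π : K × L → ℝ) (s : Strat I J K I) (t : Strat I J L J) (i : I) (j : J) :
    ℝ :=
  ∑ k, ∑ l, π (k, l) * s.1 k [] i * t.1 l [] j

-- The conditional law `π_{ij}`; it takes the junk value `0` when `P(i,j) = 0`.
def posterior (π : K × L → ℝ) (s : Strat I J K I) (t : Strat I J L J) (i : I) (j : J)
    (kl : K × L) : ℝ :=
  π kl * s.1 kl.1 [] i * t.1 kl.2 [] j / firstStageProb π s t i j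

theorem firstStageProb_nonneg {π : K × L → ℝ} (hπ : ∀ kl, 0 ≤ π kl) (s : Strat I J K I)
    (t : Strat I J L J) (i : I) (j : J) : 0 ≤ firstStageProb π s t i j :=
  sum_nonneg fun _ _ => sum_nonneg fun _ _ =>
    mul_nonneg (mul_nonneg (hπ _) ((s.2 _ _).1 i)) ((t.2 _ _).1 j)

theorem sum_firstStageProb (π : K × L → ℝ) (s : Strat I J K I) (t : Strat I J L J) (i : I) :
    ∑ j, firstStageProb π s t i j = ∑ k, ∑ l, ∑ j, π (k, l) * s.1 k [] i * t.1 l [] j := by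
  simp only [firstStageProb]
  rw [sum_comm]
  exact sum_congr rfl fun k _ => sum_comm

theorem one_sub_mul_sum_sum_mul_div {θ₀ : ℝ} (hθ₀ : 1 - θ₀ ≠ 0) (G : K → L → I → J → ℝ)
    (p x : K → ℝ) (Q : K → L → ℝ) (s : Strat I J K I) (t : Strat I J L J) :
    (1 - θ₀) * ∑ i, ∑ k, p k * s.1 k [] i *
        ((x k - θ₀ * ∑ l, ∑ j, Q k l * t.1 l [] j * G k l i j) / (1 - θ₀)) =
      ∑ k, p k * x k -
        θ₀ * ∑ k, ∑ l, p k * Q k l * ∑ i, ∑ j, s.1 k [] i * t.1 l [] j * G k l i j := by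
  have hx : ∑ i, ∑ k, p k * s.1 k [] i * x k = ∑ k, p k * x k := by
    rw [sum_comm]
    exact sum_congr rfl fun k _ => by simp only [← sum_mul, ← mul_sum, (s.2 _ _).2, mul_one]
  have hG : ∑ i, ∑ k, p k * s.1 k [] i * ∑ l, ∑ j, Q k l * t.1 l [] j * G k l i j =
      ∑ k, ∑ l, p k * Q k l * ∑ i, ∑ j, s.1 k [] i * t.1 l [] j * G k l i j := by
    simp only [mul_sum]
    rw [sum_comm]
    refine sum_congr rfl fun k _ => ?_
    rw [sum_comm]
    exact sum_congr rfl fun l _ => sum_congr rfl fun i _ => sum_congr rfl fun j _ => by ring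
  rw [← hx, ← hG, mul_sum, mul_sum, ← sum_sub_distrib]
  exact sum_congr rfl fun i _ => by
    rw [mul_sum, mul_sum, ← sum_sub_distrib]
    exact sum_congr rfl fun k _ => by field_simp

theorem ite_pos_mul_pay_posterior (θ : ℕ → ℝ) (G : K → L → I → J → ℝ) {π : K × L → ℝ}
    (hπ : ∀ kl, 0 ≤ π kl) (s : Strat I J K I) (t : Strat I J L J) (i : I) (j : J) :
    (if 0 < firstStageProb π s t i j then
        firstStageProb π s t i j * pay θ G (posterior π s t i j) (s.cont (i, j)) (t.cont (i, j))
      else 0) =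
      ∑ k, ∑ l, π (k, l) * s.1 k [] i * t.1 l [] j *
        ∑' m, θ m * stagePay (fun h => s.1 k ((i, j) :: h)) (fun h => t.1 l ((i, j) :: h))
          (G k l) m := by
  have := ite_pos_mul_sum_div (w := fun kl : K × L => π kl * s.1 kl.1 [] i * t.1 kl.2 [] j)
    (fun kl => mul_nonneg (mul_nonneg (hπ kl) ((s.2 _ _).1 i)) ((t.2 _ _).1 j))
    (fun kl => ∑' m, θ m * stagePay (fun h => s.1 kl.1 ((i, j) :: h))
      (fun h => t.1 kl.2 ((i, j) :: h)) (G kl.1 kl.2) m)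
  simp only [Fintype.sum_prod_type] at this
  simpa only [pay, payA, posterior, firstStageProb, Strat.cont, mul_one] using this

theorem pay_eq_first_stage_add {θ θ' : ℕ → ℝ} (hθ : Summable θ)
    (hθ' : ∀ m, θ (m + 1) = (1 - θ 0) * θ' m) (G : K → L → I → J → ℝ) {π : K × L → ℝ}
    (hπ : ∀ kl, 0 ≤ π kl) (s : Strat I J K I) (t : Strat I J L J) :
    pay θ G π s t =
      θ 0 * ∑ k, ∑ l, π (k, l) * ∑ i, ∑ j, s.1 k [] i * t.1 l [] j * G k l i j +
        (1 - θ 0) * ∑ i, ∑ j,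
          if 0 < firstStageProb π s t i j then
            firstStageProb π s t i j *
              pay θ' G (posterior π s t i j) (s.cont (i, j)) (t.cont (i, j))
          else 0 := by
  simp only [ite_pos_mul_pay_posterior θ' G hπ]
  simp only [pay, payA, mul_one, tsum_mul_stagePay hθ (s.2 _) (t.2 _), hθ', mul_assoc,
    tsum_mul_left, mul_add, sum_add_distrib, mul_sum]
  rw [sum_sum_sum_sum_comm (fun k l i j => π (k, l) * (s.1 k [] i * _))]
  simp only [← Fintype.sum_prod_type']
  congr 1 <;> exact sum_congr rfl fun _ _ => by ring

end FirstStage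

/-- Stages are indexed from `0` (so `θ 0 = θ_1`); `Pi i` is
`P^π_{στ}(i)`, `Pij i j` is `P^π_{στ}(i,j)` (so `Pij i j / Pi i = P^π_{στ}(j|i)`),
`pi i` is the posterior `p_i = (P^π_{στ}(k|i))_k`, `πij i j` is the conditional
law `π_{ij}`, and `GQ i` is the vector `G^Q_{iτ}`. -/
theorem stmt_12_general
    {K L I J : Type*} [Fintype K] [Fintype L] [Fintype I] [Fintype J]
    (G : K → L → I → J → ℝ)
    (θ : ℕ → ℝ) (hθ1 : HasSum θ 1) (hθlt : θ 0 < 1)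
    (θplus : ℕ → ℝ) (hθplus : ∀ m, θplus m = θ (m + 1) / (1 - θ 0))
    (p : K → ℝ) (hp : p ∈ stdSimplex ℝ K)
    (Q : K → L → ℝ) (hQ : ∀ k, Q k ∈ stdSimplex ℝ L)
    (x : K → ℝ)
    (π : K × L → ℝ) (hπ : ∀ k l, π (k, l) = p k * Q k l)
    (s : Strat I J K I) (t : Strat I J L J)
    (Pij : I → J → ℝ)
    (hPij : ∀ i j, Pij i j = ∑ k, ∑ l, π (k, l) * s.1 k [] i * t.1 l [] j)
    (Pi : I → ℝ)
    (hPi : ∀ i, Pi i = ∑ k, ∑ l, ∑ j, π (k, l) * s.1 k [] i * t.1 l [] j)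
    (pi : I → K → ℝ)
    (hpi : ∀ i k, pi i k =
      (∑ l, ∑ j, π (k, l) * s.1 k [] i * t.1 l [] j) / Pi i)
    (πij : I → J → K × L → ℝ)
    (hπij : ∀ i j kl, πij i j kl =
      π kl * s.1 kl.1 [] i * t.1 kl.2 [] j / Pij i j)
    (GQ : I → K → ℝ)
    (hGQ : ∀ i k, GQ i k = ∑ l, ∑ j, Q k l * t.1 l [] j * G k l i j) :
    hDual θ G x Q (fun _ => 1) p s t =
      (1 - θ 0) * ∑ i,
        (if 0 < Pi i then
          Pi i *
            ((∑ j,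
              if 0 < Pij i j / Pi i then
                (Pij i j / Pi i) *
                  pay θplus G (πij i j)
                    ⟨fun k h => s.1 k ((i, j) :: h), fun k h => s.2 k ((i, j) :: h)⟩
                    ⟨fun l h => t.1 l ((i, j) :: h), fun l h => t.2 l ((i, j) :: h)⟩
              else 0) -
            ∑ k, pi i k * ((x k - θ 0 * GQ i k) / (1 - θ 0)))
        else 0) := by
  have hne : 1 - θ 0 ≠ 0 := (sub_pos.2 hθlt).ne'
  have hπ0 : ∀ kl, 0 ≤ π kl := fun kl => (hπ kl.1 kl.2).symm ▸ mul_nonneg (hp.1 _) ((hQ _).1 _)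
  have hθ' : ∀ m, θ (m + 1) = (1 - θ 0) * θplus m := fun m => by rw [hθplus]; field_simp
  obtain rfl : Pij = firstStageProb π s t := funext₂ hPij
  obtain rfl : πij = posterior π s t := funext₃ hπij
  have hmarg : ∀ i k, ∑ l, ∑ j, π (k, l) * s.1 k [] i * t.1 l [] j = p k * s.1 k [] i := by
    simpa only [hπ] using sum_sum_mul_strat_mul_strat hQ s t
  have hDual_eq : hDual θ G x Q (fun _ => 1) p s t = pay θ G π s t - ∑ k, p k * x k := by
    rw [hDual, show (fun kl : K × L => p kl.1 * Q kl.1 kl.2) = π from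
      funext fun kl => (hπ _ _).symm]
    rfl
  simp only [hpi]
  rw [sum_congr rfl fun i _ => ite_pos_mul_sum_div_sub_sum_div (a := firstStageProb π s t i)
    (v := fun k => ∑ l, ∑ j, π (k, l) * s.1 k [] i * t.1 l [] j)
    (firstStageProb_nonneg hπ0 s t i) (fun k => hmarg i k ▸ mul_nonneg (hp.1 k) ((s.2 _ _).1 i))
    ((sum_firstStageProb π s t i).trans (hPi i).symm) (hPi i).symm _ _]
  rw [hDual_eq, pay_eq_first_stage_add hθ1.summable hθ' G hπ0 s t, sum_sub_distrib, mul_sub]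
  simp only [hmarg, hGQ]
  rw [one_sub_mul_sum_sum_mul_div hne]
  simp only [hπ, Strat.cont]
  ring

/-- recursive formula for the dual payoff
`h_θ[x,Q](p,ŝ,t̂) = γ_θ(p⊗Q,ŝ,t̂) − ⟨p,x⟩`, splitting the first stage from the
continuation games.  Stages are indexed from `0` (so `θ 0 = θ_1`); `Pi i` is
`P^π_{στ}(i)`, `Pij i j` is `P^π_{στ}(i,j)` (so `Pij i j / Pi i = P^π_{στ}(j|i)`),
`pi i` is the posterior `p_i = (P^π_{στ}(k|i))_k`, `πij i j` is the conditional
law `π_{ij}`, and `GQ i` is the vector `G^Q_{iτ}`. -/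
theorem stmt_12
    {K L I J : Type*} [Fintype K] [Fintype L] [Fintype I] [Fintype J]
    [Nonempty K] [Nonempty L] [Nonempty I] [Nonempty J]
    (G : K → L → I → J → ℝ)
    (θ : ℕ → ℝ) (hθ0 : ∀ m, 0 ≤ θ m) (hθ1 : HasSum θ 1) (hθlt : θ 0 < 1)
    (θplus : ℕ → ℝ) (hθplus : ∀ m, θplus m = θ (m + 1) / (1 - θ 0))
    (p : K → ℝ) (hp : p ∈ stdSimplex ℝ K)
    (Q : K → L → ℝ) (hQ : ∀ k, Q k ∈ stdSimplex ℝ L)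
    (x : K → ℝ)
    (π : K × L → ℝ) (hπ : ∀ k l, π (k, l) = p k * Q k l)
    (s : Strat I J K I) (t : Strat I J L J)
    (Pij : I → J → ℝ)
    (hPij : ∀ i j, Pij i j = ∑ k, ∑ l, π (k, l) * s.1 k [] i * t.1 l [] j)
    (Pi : I → ℝ)
    (hPi : ∀ i, Pi i = ∑ k, ∑ l, ∑ j, π (k, l) * s.1 k [] i * t.1 l [] j)
    (pi : I → K → ℝ)
    (hpi : ∀ i k, pi i k =
      (∑ l, ∑ j, π (k, l) * s.1 k [] i * t.1 l [] j) / Pi i)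
    (πij : I → J → K × L → ℝ)
    (hπij : ∀ i j kl, πij i j kl =
      π kl * s.1 kl.1 [] i * t.1 kl.2 [] j / Pij i j)
    (GQ : I → K → ℝ)
    (hGQ : ∀ i k, GQ i k = ∑ l, ∑ j, Q k l * t.1 l [] j * G k l i j) :
    hDual θ G x Q (fun _ => 1) p s t =
      (1 - θ 0) * ∑ i,
        (if 0 < Pi i then
          Pi i *
            ((∑ j,
              if 0 < Pij i j / Pi i then
                (Pij i j / Pi i) *
                  pay θplus G (πij i j)
                    ⟨fun k h => s.1 k ((i, j) :: h), fun k h => s.2 k ((i, j) :: h)⟩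
                    ⟨fun l h => t.1 l ((i, j) :: h), fun l h => t.2 l ((i, j) :: h)⟩
              else 0) -
            ∑ k, pi i k * ((x k - θ 0 * GQ i k) / (1 - θ 0)))
        else 0) :=
  stmt_12_general G θ hθ1 hθlt θplus hθplus p hp Q hQ x π hπ s t Pij hPij Pi hPi pi hpi πij hπij GQ
    hGQ
end

section
/- Let π = p⊗Q with p∈Δ(K) and Q∈Δ(L)^K, let σ∈Δ(I)^K, τ∈Δ(J)^L, and let (i,j) satisfy P^π_{στ}(i,j)>0. Define p_{ij}∈ℝ^K by p_{ij}^k := P^π_{στ}(k|i)·P^π_{στ}(j|k)/P^π_{στ}(j|i) if P^π_{στ}(k|i)>0 and p_{ij}^k := 0 otherwise, and define Q_j∈Δ(L)^K by Q_j(ℓ|k) := Q(ℓ|k)τ^ℓ(j)/(Σ_{ℓ'}Q(ℓ'|k)τ^{ℓ'}(j)) if Σ_{ℓ'}Q(ℓ'|k)τ^{ℓ'}(j)>0 and Q_j(·|k) := Q(·|k) otherwise. Then p_{ij}∈Δ(K) and the conditional law satisfies π_{ij} = p_{ij}⊗Q_j, i.e. π_{ij}^{kℓ} = p_{ij}^k·Q_j(ℓ|k)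 for all (k,ℓ)∈K×L. -/
/-!
Under `π = p ⊗ Q` the joint law `p k Q(ℓ|k) σ^k(i) τ^ℓ(j)` factors through `k`: summing out `ℓ`
leaves `p k σ^k(i) S_k(j)` with `S_k(j) = Σ_ℓ Q(ℓ|k) τ^ℓ(j)`, and every marginal in the statement is
obtained by collapsing the remaining simplex sums. Hence `p_{ij}^k = p k σ^k(i) S_k(j) / P(i,j)`,
a normalized nonnegative vector, and `π_{ij}^{kℓ} = p_{ij}^k · Q(ℓ|k) τ^ℓ(j) / S_k(j)`, where the
quotient is exactly `Q_j(ℓ|k)` (when `S_k(j) = 0` both sides vanish).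
-/

open Finset

section Simplex

variable {ι κ : Type*} [Fintype ι] [Fintype κ]

lemma sum_mul_of_mem_stdSimplex {f : ι → ℝ} (hf : f ∈ stdSimplex ℝ ι) (c : ℝ) :
    ∑ x, c * f x = c := by
  rw [← mul_sum, hf.2, mul_one]

lemma mixture_mem_stdSimplex {q : κ → ℝ} (hq : q ∈ stdSimplex ℝ κ) {τ : κ → ι → ℝ}
    (hτ : ∀ l, τ l ∈ stdSimplex ℝ ι) : (fun x => ∑ l, q l * τ l x) ∈ stdSimplex ℝ ι := by
  refine ⟨fun x => sum_nonneg fun l _ => mul_nonneg (hq.1 l) ((hτ l).1 x), ?_⟩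
  rw [sum_comm]
  simp_rw [sum_mul_of_mem_stdSimplex (hτ _)]
  exact hq.2

lemma div_sum_mem_stdSimplex {w : ι → ℝ} (hw : ∀ x, 0 ≤ w x) (hpos : 0 < ∑ x, w x) :
    (fun x => w x / ∑ y, w y) ∈ stdSimplex ℝ ι :=
  ⟨fun x => div_nonneg (hw x) hpos.le, by rw [← sum_div, div_self hpos.ne']⟩

lemma sum_mul_ite_div_sum {a : ι → ℝ} (ha : ∀ x, 0 ≤ a x) (b : ℝ) (x : ι) :
    (∑ y, a y) * (if 0 < ∑ y, a y then a x / ∑ y, a y else b) = a x := by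
  rcases (sum_nonneg fun y _ => ha y).eq_or_lt with h | h
  · rw [← h, zero_mul]
    exact ((sum_eq_zero_iff_of_nonneg fun y _ => ha y).1 h.symm x (mem_univ x)).symm
  · rw [if_pos h, mul_div_cancel₀ _ h.ne']

end Simplex

namespace JointLaw

variable {K L I J : Type*} {p : K → ℝ} {Q : K → L → ℝ} {σ : K → I → ℝ} {τ : L → J → ℝ}

lemma marginal_kij [Fintype L] (k : K) (i : I) (j : J) :
    ∑ l, p k * Q k l * σ k i * τ l j = p k * σ k i * ∑ l, Q k l * τ l j := by
  rw [mul_sum]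
  exact sum_congr rfl fun l _ => by ring

lemma marginal_ki [Fintype L] [Fintype J] (hQ : ∀ k, Q k ∈ stdSimplex ℝ L)
    (hτ : ∀ l, τ l ∈ stdSimplex ℝ J) (k : K) (i : I) :
    ∑ l, ∑ j, p k * Q k l * σ k i * τ l j = p k * σ k i := by
  simp_rw [sum_mul_of_mem_stdSimplex (hτ _)]
  rw [← sum_mul_of_mem_stdSimplex (hQ k) (p k * σ k i)]
  exact sum_congr rfl fun l _ => by ring

lemma marginal_kj [Fintype L] [Fintype I] (hσ : ∀ k, σ k ∈ stdSimplex ℝ I) (k : K) (j : J) :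
    ∑ l, ∑ i, p k * Q k l * σ k i * τ l j = p k * ∑ l, Q k l * τ l j := by
  rw [mul_sum]
  refine sum_congr rfl fun l _ => ?_
  rw [← sum_mul_of_mem_stdSimplex (hσ k) (p k * (Q k l * τ l j))]
  exact sum_congr rfl fun i _ => by ring

lemma marginal_k [Fintype L] [Fintype I] [Fintype J] (hQ : ∀ k, Q k ∈ stdSimplex ℝ L)
    (hσ : ∀ k, σ k ∈ stdSimplex ℝ I) (hτ : ∀ l, τ l ∈ stdSimplex ℝ J) (k : K) :
    ∑ l, ∑ i, ∑ j, p k * Q k l * σ k i * τ l j = p k := by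
  simp only [sum_mul_of_mem_stdSimplex (hτ _), sum_mul_of_mem_stdSimplex (hσ _),
    sum_mul_of_mem_stdSimplex (hQ _)]

end JointLaw

/-- Bayes' rule `P(k|i) P(j|k) / P(j|i) = P(k,i,j) / P(i,j)` with `P(k|i) = p s / Pi` and
`P(j|k) = p S / p`; the guard `0 < P(k|i)` excludes `p = 0`, where `p S / p` is the junk `0`. -/
lemma bayes_posterior_eq {p s S Pi Pij : ℝ} (hp : 0 ≤ p) (hs : 0 ≤ s) (hPi : 0 < Pi)
    (hPij : Pij ≠ 0) :
    (if 0 < p * s / Pi then p * s / Pi * (p * S / p) / (Pij / Pi) else 0) = p * s * S / Pij := by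
  rcases (mul_nonneg hp hs).eq_or_lt with h | h
  · rw [← h, zero_div, if_neg (lt_irrefl 0), zero_mul, zero_div]
  · have hp0 : p ≠ 0 := by rintro rfl; simp at h
    rw [if_pos (div_pos h hPi)]
    field_simp

theorem stmt_13_general
    {K L I J : Type*} [Fintype K] [Fintype L] [Fintype I] [Fintype J]
    (p : K → ℝ) (hp : p ∈ stdSimplex ℝ K)
    (Q : K → L → ℝ) (hQ : ∀ k, Q k ∈ stdSimplex ℝ L)
    (π : K × L → ℝ) (hπ : ∀ k l, π (k, l) = p k * Q k l)
    (σ : K → I → ℝ) (hσ : ∀ k, σ k ∈ stdSimplex ℝ I)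
    (τ : L → J → ℝ) (hτ : ∀ l, τ l ∈ stdSimplex ℝ J)
    (Pij : I → J → ℝ)
    (hPij : ∀ i j, Pij i j = ∑ k, ∑ l, π (k, l) * σ k i * τ l j)
    (Pi : I → ℝ)
    (hPi : ∀ i, Pi i = ∑ k, ∑ l, ∑ j, π (k, l) * σ k i * τ l j)
    (Pk : K → ℝ)
    (hPk : ∀ k, Pk k = ∑ l, ∑ i, ∑ j, π (k, l) * σ k i * τ l j)
    (Pki : K → I → ℝ)
    (hPki : ∀ k i, Pki k i = (∑ l, ∑ j, π (k, l) * σ k i * τ l j) / Pi i)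
    (Pjk : J → K → ℝ)
    (hPjk : ∀ j k, Pjk j k = (∑ l, ∑ i, π (k, l) * σ k i * τ l j) / Pk k)
    (i : I) (j : J) (hpos : 0 < Pij i j)
    (πij : K × L → ℝ)
    (hπij : ∀ kl, πij kl = π kl * σ kl.1 i * τ kl.2 j / Pij i j)
    (pij : K → ℝ)
    (hpij : ∀ k, pij k =
      if 0 < Pki k i then Pki k i * Pjk j k / (Pij i j / Pi i) else 0)
    (Qj : K → L → ℝ)
    (hQj : ∀ k l, Qj k l =
      if 0 < ∑ l', Q k l' * τ l' j then
        Q k l * τ l j / ∑ l', Q k l' * τ l' j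
      else Q k l) :
    pij ∈ stdSimplex ℝ K ∧ ∀ k l, πij (k, l) = pij k * Qj k l := by
  simp only [hπ] at hPij hPi hPk hPki hPjk
  set S : K → ℝ := fun k => ∑ l, Q k l * τ l j
  have hS : ∀ k, 0 ≤ S k ∧ S k ≤ 1 := fun k =>
    mem_Icc_of_mem_stdSimplex (mixture_mem_stdSimplex (hQ k) hτ) j
  have hpσ : ∀ k, 0 ≤ p k * σ k i := fun k => mul_nonneg (hp.1 k) ((hσ k).1 i)
  have hPij' : Pij i j = ∑ k, p k * σ k i * S k := by
    simp only [hPij, JointLaw.marginal_kij, S]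
  have hPi_pos : 0 < Pi i := by
    refine hpos.trans_le ?_
    rw [hPij', hPi]
    simp only [JointLaw.marginal_ki hQ hτ]
    exact sum_le_sum fun k _ => mul_le_of_le_one_right (hpσ k) (hS k).2
  have hpij_eq : ∀ k, pij k = p k * σ k i * S k / Pij i j := fun k => by
    rw [hpij, hPki, hPjk, hPk, JointLaw.marginal_ki hQ hτ, JointLaw.marginal_kj hσ,
      JointLaw.marginal_k hQ hσ hτ]
    exact bayes_posterior_eq (hp.1 k) ((hσ k).1 i) hPi_pos hpos.ne'
  refine ⟨?_, fun k l => ?_⟩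
  · rw [funext hpij_eq, hPij']
    exact div_sum_mem_stdSimplex (fun k => mul_nonneg (hpσ k) (hS k).1) (hPij' ▸ hpos)
  · have hQS : Q k l * τ l j = S k * Qj k l := by
      rw [hQj]
      exact (sum_mul_ite_div_sum (fun l => mul_nonneg ((hQ k).1 l) ((hτ l).1 j)) _ l).symm
    rw [hπij, hπ, hpij_eq]
    linear_combination (p k * σ k i / Pij i j) * hQS

/-- decomposition of the conditional law. If `π = p ⊗ Q` and
`P^π_{στ}(i,j) > 0`, then the conditional law `π_{ij}` of `(k,ℓ)` given `(i,j)`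
decomposes as `π_{ij} = p_{ij} ⊗ Q_j`, where
`p_{ij}^k = P(k|i)·P(j|k)/P(j|i)` (set to `0` when `P(k|i) = 0`) and
`Q_j(ℓ|k) = Q(ℓ|k)τ^ℓ(j)/Σ_{ℓ'}Q(ℓ'|k)τ^{ℓ'}(j)` (set to `Q(·|k)` when the
denominator vanishes); moreover `p_{ij} ∈ Δ(K)`.  Here the conditionals of the
joint law `P^π_{στ}(k,ℓ,i,j) = π^{kℓ}σ^k(i)τ^ℓ(j)` are written as quotients of
its marginals: `Pi i = P(i)`, `Pk k = P(k)`, `Pki k i = P(k|i)`,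
`Pjk j k = P(j|k)`, `Pij i j = P(i,j)`. -/
theorem stmt_13
    {K L I J : Type*} [Fintype K] [Fintype L] [Fintype I] [Fintype J]
    [Nonempty K] [Nonempty L] [Nonempty I] [Nonempty J]
    (p : K → ℝ) (hp : p ∈ stdSimplex ℝ K)
    (Q : K → L → ℝ) (hQ : ∀ k, Q k ∈ stdSimplex ℝ L)
    (π : K × L → ℝ) (hπ : ∀ k l, π (k, l) = p k * Q k l)
    (σ : K → I → ℝ) (hσ : ∀ k, σ k ∈ stdSimplex ℝ I)
    (τ : L → J → ℝ) (hτ : ∀ l, τ l ∈ stdSimplex ℝ J)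
    (Pij : I → J → ℝ)
    (hPij : ∀ i j, Pij i j = ∑ k, ∑ l, π (k, l) * σ k i * τ l j)
    (Pi : I → ℝ)
    (hPi : ∀ i, Pi i = ∑ k, ∑ l, ∑ j, π (k, l) * σ k i * τ l j)
    (Pk : K → ℝ)
    (hPk : ∀ k, Pk k = ∑ l, ∑ i, ∑ j, π (k, l) * σ k i * τ l j)
    (Pki : K → I → ℝ)
    (hPki : ∀ k i, Pki k i = (∑ l, ∑ j, π (k, l) * σ k i * τ l j) / Pi i)
    (Pjk : J → K → ℝ)
    (hPjk : ∀ j k, Pjk j k = (∑ l, ∑ i, π (k, l) * σ k i * τ l j) / Pk k)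
    (i : I) (j : J) (hpos : 0 < Pij i j)
    (πij : K × L → ℝ)
    (hπij : ∀ kl, πij kl = π kl * σ kl.1 i * τ kl.2 j / Pij i j)
    (pij : K → ℝ)
    (hpij : ∀ k, pij k =
      if 0 < Pki k i then Pki k i * Pjk j k / (Pij i j / Pi i) else 0)
    (Qj : K → L → ℝ)
    (hQj : ∀ k l, Qj k l =
      if 0 < ∑ l', Q k l' * τ l' j then
        Q k l * τ l j / ∑ l', Q k l' * τ l' j
      else Q k l) :
    pij ∈ stdSimplex ℝ K ∧ ∀ k l, πij (k, l) = pij k * Qj k l :=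
  stmt_13_general p hp Q hQ π hπ σ hσ τ hτ Pij hPij Pi hPi Pk hPk Pki hPki Pjk hPjk i j hpos πij
    hπij pij hpij Qj hQj
end

section
/- Let π = p⊗Q with p∈Δ(K) and Q∈Δ(L)^K, let σ∈Δ(I)^K, τ∈Δ(J)^L be first-stage strategies, and let (i,j) satisfy P^π_{στ}(i,j)>0. Then for every pair of strategies (ŝ,t̂), every evaluation θ and every ζ∈ℝ^K: P^π_{στ}(j|i)·γ_θ(π_{ij}, ŝ, t̂; ζ) = γ_θ(p_i⊗Q_j, ŝ, t̂; ζ_j), where p_i := (P^π_{στ}(k|i))_{k∈K}∈Δ(K), Q_j(ℓ|k) := Q(ℓ|k)τ^ℓ(j)/P^Q_τ(j|k) if P^Q_τ(j|k)>0 and Q_j(·|k) := Q(·|k) otherwise, P^Q_τ(j|k) := Σ_ℓ Q(ℓ|k)τ^ℓ(j), and ζ_j^k := ζ^k·P^Q_τ(j|k). -/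
open scoped BigOperators

/-!
The auxiliary payoff `γ_θ(π, ŝ, t̂; ζ)` is a sum over types `(k, ℓ)` of the weight `π^{kℓ} ζ^k` times
a quantity that does not depend on `π` or `ζ`, so the identity reduces to an identity between
weights. Both weights equal `p^k σ^k(i) Q(ℓ|k) τ^ℓ(j) ζ^k / P^π_{στ}(i)`: on the left because
`P^π_{στ}(i,j)` cancels against the normalisation of `π_{ij}`, on the right because
`P^π_{στ}(k,i) = p^k σ^k(i)` and `Q_j(ℓ|k) P^Q_τ(j|k) = Q(ℓ|k) τ^ℓ(j)`, also when
`P^Q_τ(j|k) = 0`, where every `Q(ℓ|k) τ^ℓ(j)` vanishes.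
-/

open Finset

theorem const_mul_payA_eq_of_weight_eq {I J K L : Type*} [Fintype I] [Fintype J] [Fintype K]
    [Fintype L] (θ : ℕ → ℝ) (G : K → L → I → J → ℝ) (s : Strat I J K I) (t : Strat I J L J)
    {π π' : K × L → ℝ} {ζ ζ' : K → ℝ} (c : ℝ)
    (h : ∀ k l, c * (π (k, l) * ζ k) = π' (k, l) * ζ' k) :
    c * payA θ G π ζ s t = payA θ G π' ζ' s t := by
  unfold payA
  rw [mul_sum]
  refine sum_congr rfl fun k _ => ?_
  rw [mul_sum]
  refine sum_congr rfl fun l _ => ?_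
  rw [← h]
  ring

theorem ite_div_sum_mul_sum {L : Type*} [Fintype L] {f : L → ℝ} (hf : ∀ l, 0 ≤ f l)
    (g : L → ℝ) (l : L) :
    (if 0 < ∑ l', f l' then f l / ∑ l', f l' else g l) * ∑ l', f l' = f l := by
  split_ifs with hpos
  · exact div_mul_cancel₀ _ hpos.ne'
  · have hzero : ∑ l', f l' = 0 := le_antisymm (not_lt.mp hpos) (sum_nonneg fun l' _ => hf l')
    rw [hzero, mul_zero, (sum_eq_zero_iff_of_nonneg fun l' _ => hf l').mp hzero l (mem_univ l)]

theorem sum_sum_mul_eq_one_of_mem_stdSimplex {J L : Type*} [Fintype J] [Fintype L]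
    {Q : L → ℝ} {τ : L → J → ℝ} (hQ : Q ∈ stdSimplex ℝ L) (hτ : ∀ l, τ l ∈ stdSimplex ℝ J) :
    ∑ l, ∑ j, Q l * τ l j = 1 := by
  simp only [← mul_sum, (hτ _).2, mul_one, hQ.2]

theorem stmt_14_general
    {K L I J : Type*} [Fintype K] [Fintype L] [Fintype I] [Fintype J]
    (G : K → L → I → J → ℝ)
    (θ : ℕ → ℝ)
    (ζ : K → ℝ)
    (p : K → ℝ)
    (Q : K → L → ℝ) (hQ : ∀ k, Q k ∈ stdSimplex ℝ L)
    (π : K × L → ℝ) (hπ : ∀ k l, π (k, l) = p k * Q k l)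
    (σ : K → I → ℝ)
    (τ : L → J → ℝ) (hτ : ∀ l, τ l ∈ stdSimplex ℝ J)
    (Pij : I → J → ℝ)
    (Pi : I → ℝ)
    (pi : I → K → ℝ)
    (hpi : ∀ i k, pi i k = (∑ l, ∑ j, π (k, l) * σ k i * τ l j) / Pi i)
    (PQ : J → K → ℝ)
    (hPQ : ∀ j k, PQ j k = ∑ l, Q k l * τ l j)
    (Qj : J → K → L → ℝ)
    (hQj : ∀ j k l, Qj j k l =
      if 0 < PQ j k then Q k l * τ l j / PQ j k else Q k l)
    (ζj : J → K → ℝ)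
    (hζj : ∀ j k, ζj j k = ζ k * PQ j k)
    (i : I) (j : J) (hpos : 0 < Pij i j)
    (πij : K × L → ℝ)
    (hπij : ∀ kl, πij kl = π kl * σ kl.1 i * τ kl.2 j / Pij i j)
    (s : Strat I J K I) (t : Strat I J L J) :
    (Pij i j / Pi i) * payA θ G πij ζ s t =
      payA θ G (fun kl => pi i kl.1 * Qj j kl.1 kl.2) (ζj j) s t := by
  refine const_mul_payA_eq_of_weight_eq θ G s t _ fun k l => ?_
  have hpik : pi i k = p k * σ k i / Pi i := by
    have hsplit : ∀ l j, π (k, l) * σ k i * τ l j = p k * σ k i * (Q k l * τ l j) := by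
      intro l j
      rw [hπ]
      ring
    calc pi i k = (∑ l, ∑ j, p k * σ k i * (Q k l * τ l j)) / Pi i := by simp only [hpi, hsplit]
      _ = p k * σ k i * (∑ l, ∑ j, Q k l * τ l j) / Pi i := by simp only [mul_sum]
      _ = p k * σ k i / Pi i := by
        rw [sum_sum_mul_eq_one_of_mem_stdSimplex (hQ k) hτ, mul_one]
  have hQjPQ : Qj j k l * PQ j k = Q k l * τ l j := by
    rw [hQj, hPQ]
    exact ite_div_sum_mul_sum (fun l' => mul_nonneg ((hQ k).1 l') ((hτ l').1 j)) (Q k) l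
  simp only [hπij, hπ, hζj, hpik]
  calc Pij i j / Pi i * (p k * Q k l * σ k i * τ l j / Pij i j * ζ k)
      = p k * σ k i / Pi i * (Q k l * τ l j) * ζ k := by field_simp [hpos.ne']
    _ = p k * σ k i / Pi i * Qj j k l * (ζ k * PQ j k) := by rw [← hQjPQ]; ring

/-- the key technical lemma. If `π = p ⊗ Q` and
`P^π_{στ}(i,j) > 0`, then for all strategies `(ŝ,t̂)`, every evaluation `θ`
and every `ζ ∈ ℝ^K`:
`P^π_{στ}(j|i) · γ_θ(π_{ij}, ŝ, t̂; ζ) = γ_θ(p_i ⊗ Q_j, ŝ, t̂; ζ_j)`,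
where `p_i = (P^π_{στ}(k|i))_k`, `P^Q_τ(j|k) = Σ_ℓ Q(ℓ|k)τ^ℓ(j)`,
`Q_j(ℓ|k) = Q(ℓ|k)τ^ℓ(j)/P^Q_τ(j|k)` (with fallback `Q(·|k)` when
`P^Q_τ(j|k) = 0`) and `ζ_j^k = ζ^k·P^Q_τ(j|k)`.
Here `P^π_{στ}(j|i) = Pij i j / Pi i`. -/
theorem stmt_14
    {K L I J : Type*} [Fintype K] [Fintype L] [Fintype I] [Fintype J]
    [Nonempty K] [Nonempty L] [Nonempty I] [Nonempty J]
    (G : K → L → I → J → ℝ)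
    (θ : ℕ → ℝ) (hθ0 : ∀ m, 0 ≤ θ m) (hθ1 : HasSum θ 1)
    (ζ : K → ℝ)
    (p : K → ℝ) (hp : p ∈ stdSimplex ℝ K)
    (Q : K → L → ℝ) (hQ : ∀ k, Q k ∈ stdSimplex ℝ L)
    (π : K × L → ℝ) (hπ : ∀ k l, π (k, l) = p k * Q k l)
    (σ : K → I → ℝ) (hσ : ∀ k, σ k ∈ stdSimplex ℝ I)
    (τ : L → J → ℝ) (hτ : ∀ l, τ l ∈ stdSimplex ℝ J)
    (Pij : I → J → ℝ)
    (hPij : ∀ i j, Pij i j = ∑ k, ∑ l, π (k, l) * σ k i * τ l j)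
    (Pi : I → ℝ)
    (hPi : ∀ i, Pi i = ∑ k, ∑ l, ∑ j, π (k, l) * σ k i * τ l j)
    (pi : I → K → ℝ)
    (hpi : ∀ i k, pi i k = (∑ l, ∑ j, π (k, l) * σ k i * τ l j) / Pi i)
    (PQ : J → K → ℝ)
    (hPQ : ∀ j k, PQ j k = ∑ l, Q k l * τ l j)
    (Qj : J → K → L → ℝ)
    (hQj : ∀ j k l, Qj j k l =
      if 0 < PQ j k then Q k l * τ l j / PQ j k else Q k l)
    (ζj : J → K → ℝ)
    (hζj : ∀ j k, ζj j k = ζ k * PQ j k)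
    (i : I) (j : J) (hpos : 0 < Pij i j)
    (πij : K × L → ℝ)
    (hπij : ∀ kl, πij kl = π kl * σ kl.1 i * τ kl.2 j / Pij i j)
    (s : Strat I J K I) (t : Strat I J L J) :
    (Pij i j / Pi i) * payA θ G πij ζ s t =
      payA θ G (fun kl => pi i kl.1 * Qj j kl.1 kl.2) (ζj j) s t :=
  stmt_14_general G θ ζ p Q hQ π hπ σ τ hτ Pij Pi pi hpi PQ hPQ Qj hQj ζj hζj i j hpos πij hπij s t
end
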